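/- arXiv:1008.5218 — 5 statements merged into one kernel-verified Lean document; each statement's English description precedes it below -/
import Mathlib

section
/- Let A be an n×n Hermitian matrix partitioned in 2×2 block form with blocks A11 (size (n−k)×(n−k)), A21^H (upper right), A21, and A22 (size k×k). Suppose λ is an eigenvalue of A with λ ∉ spectrum(A22), and let x = [x1; x2] be a unit eigenvector of A for λ, with x2 ∈ ℂ^k. Then ‖x2‖₂ ≤ ‖A21‖₂ / min_j |λ − λ_j(A22)|, where λ_j(A22) are the eigenvalues of A22 and the norm is the spectral norm. -/
/-!
The second block row of the eigenvalue equation reads `(λ - A22) x2 = A21 x1`. Expanding in an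
orthonormal eigenbasis of `A22`, the operator `λ - A22` stretches every vector by at least the gap
`δ = min_j |λ - λ_j(A22)|`, while `‖A21 x1‖ ≤ ‖A21‖ ‖x1‖ ≤ ‖A21‖`; hence `δ ‖x2‖ ≤ ‖A21‖`.
-/

open Matrix

noncomputable def euclNorm {K : Type*} [RCLike K] {I : Type*} [Fintype I] (x : I → K) : ℝ :=
  Real.sqrt (∑ i, ‖x i‖ ^ 2)

noncomputable def specNorm {K : Type*} [RCLike K] {I J : Type*} [Fintype I] [Fintype J]
    [DecidableEq J] (M : Matrix I J K) : ℝ :=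
  ‖LinearMap.toContinuousLinearMap (Matrix.toEuclideanLin M)‖

noncomputable def ithEig {K : Type*} [RCLike K] {I : Type*} [Fintype I] [DecidableEq I]
    {A : Matrix I I K} (hA : A.IsHermitian) (i : Fin (Fintype.card I)) : ℝ :=
  (hA.eigenvalues ∘ (Fintype.equivFin I).symm)
    (Tuple.sort (hA.eigenvalues ∘ (Fintype.equivFin I).symm) i)

open scoped InnerProductSpace

theorem OrthonormalBasis.mul_norm_le_norm_apply_of_apply_eq_smul {𝕜 ι E : Type*} [RCLike 𝕜]
    [Fintype ι] [NormedAddCommGroup E] [InnerProductSpace 𝕜 E] (u : OrthonormalBasis ι 𝕜 E)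
    {T : E →ₗ[𝕜] E} {ν : ι → 𝕜} (hT : ∀ j, T (u j) = ν j • u j) {c : ℝ} (hc : 0 ≤ c)
    (hν : ∀ j, c ≤ ‖ν j‖) (v : E) : c * ‖v‖ ≤ ‖T v‖ := by
  have hcoord : ∀ i, ⟪u i, T v⟫_𝕜 = ν i * ⟪u i, v⟫_𝕜 := fun i => by
    conv_lhs => rw [← u.sum_repr' v, map_sum]
    simp only [map_smul, hT, smul_smul, u.orthonormal.inner_right_fintype, mul_comm]
  refine (pow_le_pow_iff_left₀ (by positivity) (norm_nonneg _) two_ne_zero).mp ?_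
  calc (c * ‖v‖) ^ 2 = ∑ i, c ^ 2 * ‖⟪u i, v⟫_𝕜‖ ^ 2 := by
        rw [mul_pow, ← u.sum_sq_norm_inner_right, Finset.mul_sum]
    _ ≤ ∑ i, ‖⟪u i, T v⟫_𝕜‖ ^ 2 := by
        gcongr with i
        rw [hcoord, norm_mul, mul_pow]
        gcongr
        exact hν i
    _ = ‖T v‖ ^ 2 := u.sum_sq_norm_inner_right _

theorem Matrix.IsHermitian.mul_norm_le_norm_toEuclideanLin_smul_one_sub {𝕜 n : Type*} [RCLike 𝕜]
    [Fintype n] [DecidableEq n] {A : Matrix n n 𝕜} (hA : A.IsHermitian) (μ : ℝ) {c : ℝ}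
    (hc : 0 ≤ c) (hμ : ∀ j, c ≤ |μ - hA.eigenvalues j|) (v : EuclideanSpace 𝕜 n) :
    c * ‖v‖ ≤ ‖toEuclideanLin ((μ : 𝕜) • 1 - A) v‖ := by
  refine hA.eigenvectorBasis.mul_norm_le_norm_apply_of_apply_eq_smul
    (ν := fun j => ((μ - hA.eigenvalues j : ℝ) : 𝕜)) (fun j => ?_) hc
    (fun j => by simpa only [RCLike.norm_ofReal] using hμ j) v
  ext i
  simp only [toLpLin_apply, PiLp.toLp_apply, sub_mulVec, smul_mulVec, one_mulVec,
    hA.mulVec_eigenvectorBasis, Pi.sub_apply, Pi.smul_apply, PiLp.smul_apply, smul_eq_mul,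
    RCLike.real_smul_eq_coe_mul, RCLike.ofReal_sub]
  ring

theorem euclNorm_eq_norm_toLp {K I : Type*} [RCLike K] [Fintype I] (x : I → K) :
    euclNorm x = ‖WithLp.toLp 2 x‖ := by
  rw [EuclideanSpace.norm_eq]; rfl

theorem euclNorm_mulVec_le {K I J : Type*} [RCLike K] [Fintype I] [Fintype J] [DecidableEq J]
    (M : Matrix I J K) (x : J → K) : euclNorm (M *ᵥ x) ≤ specNorm M * euclNorm x := by
  rw [euclNorm_eq_norm_toLp, euclNorm_eq_norm_toLp]
  exact (LinearMap.toContinuousLinearMap (toEuclideanLin M)).le_opNorm (WithLp.toLp 2 x)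

theorem euclNorm_le_euclNorm_sumElim_left {K I J : Type*} [RCLike K] [Fintype I] [Fintype J]
    (x : I → K) (y : J → K) : euclNorm x ≤ euclNorm (Sum.elim x y) := by
  unfold euclNorm
  gcongr
  rw [Fintype.sum_sum_type]
  simp only [Sum.elim_inl, Sum.elim_inr, le_add_iff_nonneg_right]
  positivity

theorem Matrix.smul_one_sub_mulVec_of_fromBlocks_mulVec_eq_smul {l n α : Type*} [Fintype l]
    [Fintype n] [DecidableEq n] [CommRing α] {A : Matrix l l α} {B : Matrix l n α}
    {C : Matrix n l α} {D : Matrix n n α} {μ : α} {x : l → α} {y : n → α}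
    (h : fromBlocks A B C D *ᵥ Sum.elim x y = μ • Sum.elim x y) :
    (μ • 1 - D) *ᵥ y = C *ᵥ x := by
  have hrow : C *ᵥ x + D *ᵥ y = μ • y := funext fun j => by
    simpa [fromBlocks_mulVec] using congrFun h (Sum.inr j)
  rw [sub_mulVec, smul_mulVec, one_mulVec, sub_eq_iff_eq_add, hrow]

theorem stmt_0_general {m k : ℕ}
    (A11 : Matrix (Fin m) (Fin m) ℂ) (A21 : Matrix (Fin k) (Fin m) ℂ)
    (A22 : Matrix (Fin k) (Fin k) ℂ)
    (hA22 : A22.IsHermitian)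
    (lam : ℝ) (x1 : Fin m → ℂ) (x2 : Fin k → ℂ)
    (heig : (fromBlocks A11 A21ᴴ A21 A22).mulVec (Sum.elim x1 x2)
      = (lam : ℂ) • Sum.elim x1 x2)
    (hunit : euclNorm (Sum.elim x1 x2) = 1)
    (hsep : ∀ j, lam ≠ hA22.eigenvalues j) :
    euclNorm x2 ≤ specNorm A21 / ⨅ j, |lam - hA22.eigenvalues j| := by
  rcases isEmpty_or_nonempty (Fin k) with hk | hk
  -- for `k = 0` the infimum is the junk value `0`, and so is the right-hand side
  · rw [show euclNorm x2 = 0 by simp [euclNorm]]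
    exact div_nonneg (norm_nonneg _) (Real.iInf_nonneg fun _ => abs_nonneg _)
  set δ := ⨅ j, |lam - hA22.eigenvalues j|
  have hδ : 0 < δ := by
    obtain ⟨j, hj⟩ : ∃ j, |lam - hA22.eigenvalues j| = δ := exists_eq_ciInf_of_finite
    rw [← hj]
    exact abs_pos.mpr (sub_ne_zero.mpr (hsep j))
  have hgap : ∀ j, δ ≤ |lam - hA22.eigenvalues j| := ciInf_le (Set.finite_range _).bddBelow
  rw [le_div_iff₀ hδ, mul_comm]
  calc δ * euclNorm x2
      ≤ ‖toEuclideanLin ((lam : ℂ) • 1 - A22) (WithLp.toLp 2 x2)‖ := by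
        rw [euclNorm_eq_norm_toLp]
        exact hA22.mul_norm_le_norm_toEuclideanLin_smul_one_sub lam hδ.le hgap _
    _ = euclNorm (A21 *ᵥ x1) := by
        rw [toLpLin_toLp, toLin'_apply, euclNorm_eq_norm_toLp,
          smul_one_sub_mulVec_of_fromBlocks_mulVec_eq_smul heig]
    _ ≤ specNorm A21 * euclNorm x1 := euclNorm_mulVec_le A21 x1
    _ ≤ specNorm A21 :=
        mul_le_of_le_one_right (norm_nonneg _) (hunit ▸ euclNorm_le_euclNorm_sumElim_left x1 x2)

/-- Lemma 2: eigenvector tail bound for a 2×2 block Hermitian matrix. -/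
theorem stmt_0 {m k : ℕ}
    (A11 : Matrix (Fin m) (Fin m) ℂ) (A21 : Matrix (Fin k) (Fin m) ℂ)
    (A22 : Matrix (Fin k) (Fin k) ℂ)
    (hA : (fromBlocks A11 A21ᴴ A21 A22).IsHermitian) (hA22 : A22.IsHermitian)
    (lam : ℝ) (x1 : Fin m → ℂ) (x2 : Fin k → ℂ)
    (heig : (fromBlocks A11 A21ᴴ A21 A22).mulVec (Sum.elim x1 x2)
      = (lam : ℂ) • Sum.elim x1 x2)
    (hunit : euclNorm (Sum.elim x1 x2) = 1)
    (hsep : ∀ j, lam ≠ hA22.eigenvalues j) :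
    euclNorm x2 ≤ specNorm A21 / ⨅ j, |lam - hA22.eigenvalues j| :=
  stmt_0_general A11 A21 A22 hA22 lam x1 x2 heig hunit hsep
end

section
/- Let A and E be n×n Hermitian matrices partitioned conformally as A = [[A11, A21^H],[A21, A22]] and E = [[E11, E21^H],[E21, E22]], with A22 of size k×k. Fix i, let λ_i be the i-th smallest eigenvalue of A, and suppose min_j |λ_i − λ_j(A22)| > 2‖E‖₂. For t ∈ [0,1], let λ_i(t) be the i-th smallest eigenvalue of A+tE and x(t) = [x1(t); x2(t)] a corresponding unit eigenvector with x2(t) ∈ ℂ^k. Then for all t ∈ [0,1], ‖x2(t)‖₂ ≤ (‖A21‖₂ + ‖E21‖₂) / (min_j |λ_i − λ_j(A22)| − 2‖E‖₂). -/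
open Matrix

/-!
Weyl's inequality, proved by the dimension count behind the Courant–Fischer principle, moves the
`i`-th eigenvalue of `A + tE` by at most `t‖E‖ ≤ ‖E‖`, so its distance to the spectrum of `A22` is
still at least `g - ‖E‖`, where `g` is that distance at `t = 0`. The second block row of the
eigen-equation makes `x2` an approximate eigenvector of `A22`:
`(A22 - λ_i(t)) x2 = -(A21 + tE21) x1 - tE22 x2`. As `A22` is Hermitian, the left side has norm at
least `(g - ‖E‖)‖x2‖`, and with `‖x1‖ ≤ 1`, `‖E22‖ ≤ ‖E‖` this gives
`(g - 2‖E‖)‖x2‖ ≤ ‖A21‖ + ‖E21‖`.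
-/

open scoped InnerProductSpace Matrix.Norms.L2Operator
open Finset Module Submodule

namespace OrthonormalBasis

variable {𝕜 E ι : Type*} [RCLike 𝕜] [NormedAddCommGroup E] [InnerProductSpace 𝕜 E] [Fintype ι]

lemma inner_eq_zero_of_mem_span_image (b : OrthonormalBasis ι 𝕜 E) {S : Set ι} {v : E}
    (hv : v ∈ span 𝕜 (b '' S)) {j : ι} (hj : j ∉ S) : ⟪b j, v⟫_𝕜 = 0 := by
  refine (span_le (p := LinearMap.ker (innerₛₗ 𝕜 (b j))).2 ?_ hv : _)
  rintro _ ⟨l, hl, rfl⟩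
  exact b.orthonormal.inner_eq_zero fun h => hj (h ▸ hl)

lemma finrank_span_image (b : OrthonormalBasis ι 𝕜 E) (S : Finset ι) :
    finrank 𝕜 (span 𝕜 (b '' S)) = #S := by
  rw [Set.image_eq_range]
  exact (finrank_span_eq_card (b.orthonormal.linearIndependent.comp _ Subtype.val_injective)).trans
    (by simp)

end OrthonormalBasis

namespace LinearMap.IsSymmetric

variable {𝕜 E ι : Type*} [RCLike 𝕜] [NormedAddCommGroup E] [InnerProductSpace 𝕜 E] [Fintype ι]
  {T : E →ₗ[𝕜] E} {b : OrthonormalBasis ι 𝕜 E} {μ : ι → ℝ}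

lemma inner_eigenbasis_apply (hT : T.IsSymmetric) (hb : ∀ j, T (b j) = (μ j : 𝕜) • b j)
    (v : E) (j : ι) : ⟪b j, T v⟫_𝕜 = μ j * ⟪b j, v⟫_𝕜 := by
  rw [← hT, hb, inner_smul_left, RCLike.conj_ofReal]

lemma re_inner_apply_self_eq_sum (hT : T.IsSymmetric) (hb : ∀ j, T (b j) = (μ j : 𝕜) • b j)
    (v : E) : RCLike.re ⟪v, T v⟫_𝕜 = ∑ j, μ j * ‖⟪b j, v⟫_𝕜‖ ^ 2 := by
  rw [← b.sum_inner_mul_inner v (T v), map_sum]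
  refine sum_congr rfl fun j _ => ?_
  rw [hT.inner_eigenbasis_apply hb, ← inner_conj_symm, mul_left_comm, RCLike.conj_mul]
  norm_cast

lemma norm_apply_sub_smul_sq_eq_sum (hT : T.IsSymmetric) (hb : ∀ j, T (b j) = (μ j : 𝕜) • b j)
    (c : ℝ) (v : E) :
    ‖T v - (c : 𝕜) • v‖ ^ 2 = ∑ j, (μ j - c) ^ 2 * ‖⟪b j, v⟫_𝕜‖ ^ 2 := by
  rw [← b.sum_sq_norm_inner_right]
  refine sum_congr rfl fun j _ => ?_
  rw [inner_sub_right, inner_smul_right, hT.inner_eigenbasis_apply hb, ← sub_mul, norm_mul,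
    mul_pow, ← RCLike.ofReal_sub, RCLike.norm_ofReal, sq_abs]

lemma re_inner_apply_self_le_of_mem_span (hT : T.IsSymmetric)
    (hb : ∀ j, T (b j) = (μ j : 𝕜) • b j) {S : Set ι} {a : ℝ} (hS : ∀ j ∈ S, μ j ≤ a) {v : E}
    (hv : v ∈ span 𝕜 (b '' S)) : RCLike.re ⟪v, T v⟫_𝕜 ≤ a * ‖v‖ ^ 2 := by
  rw [hT.re_inner_apply_self_eq_sum hb, ← b.sum_sq_norm_inner_right, mul_sum]
  refine sum_le_sum fun j _ => ?_
  by_cases hj : j ∈ S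
  · exact mul_le_mul_of_nonneg_right (hS j hj) (by positivity)
  · simp [b.inner_eq_zero_of_mem_span_image hv hj]

lemma le_re_inner_apply_self_of_mem_span (hT : T.IsSymmetric)
    (hb : ∀ j, T (b j) = (μ j : 𝕜) • b j) {S : Set ι} {a : ℝ} (hS : ∀ j ∈ S, a ≤ μ j) {v : E}
    (hv : v ∈ span 𝕜 (b '' S)) : a * ‖v‖ ^ 2 ≤ RCLike.re ⟪v, T v⟫_𝕜 := by
  rw [hT.re_inner_apply_self_eq_sum hb, ← b.sum_sq_norm_inner_right, mul_sum]
  refine sum_le_sum fun j _ => ?_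
  by_cases hj : j ∈ S
  · exact mul_le_mul_of_nonneg_right (hS j hj) (by positivity)
  · simp [b.inner_eq_zero_of_mem_span_image hv hj]

lemma iInf_abs_sub_mul_norm_le (hT : T.IsSymmetric) (hb : ∀ j, T (b j) = (μ j : 𝕜) • b j)
    (c : ℝ) (v : E) : (⨅ j, |c - μ j|) * ‖v‖ ≤ ‖T v - (c : 𝕜) • v‖ := by
  have hnonneg : 0 ≤ ⨅ j, |c - μ j| := Real.iInf_nonneg fun j => abs_nonneg _
  refine (pow_le_pow_iff_left₀ (by positivity) (norm_nonneg _) two_ne_zero).1 ?_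
  rw [hT.norm_apply_sub_smul_sq_eq_sum hb, mul_pow, ← b.sum_sq_norm_inner_right, mul_sum]
  refine sum_le_sum fun j _ => mul_le_mul_of_nonneg_right ?_ (by positivity)
  rw [← sq_abs (μ j - c), abs_sub_comm]
  exact pow_le_pow_left₀ hnonneg (ciInf_le (Finite.bddBelow_range _) j) 2

end LinearMap.IsSymmetric

lemma ContinuousLinearMap.re_inner_apply_self_le {𝕜 E : Type*} [RCLike 𝕜] [NormedAddCommGroup E]
    [InnerProductSpace 𝕜 E] (T : E →L[𝕜] E) (v : E) :
    RCLike.re ⟪v, T v⟫_𝕜 ≤ ‖T‖ * ‖v‖ ^ 2 :=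
  calc RCLike.re ⟪v, T v⟫_𝕜 ≤ ‖v‖ * ‖T v‖ := (RCLike.re_le_norm _).trans (norm_inner_le_norm _ _)
    _ ≤ ‖v‖ * (‖T‖ * ‖v‖) := by gcongr; exact T.le_opNorm v
    _ = ‖T‖ * ‖v‖ ^ 2 := by ring

theorem le_add_norm_sub_of_card_add_card_gt {𝕜 E ι ι' : Type*} [RCLike 𝕜]
    [NormedAddCommGroup E] [InnerProductSpace 𝕜 E] [FiniteDimensional 𝕜 E] [Fintype ι]
    [Fintype ι'] {T T' : E →L[𝕜] E}
    (hT : (T : E →ₗ[𝕜] E).IsSymmetric) (hT' : (T' : E →ₗ[𝕜] E).IsSymmetric)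
    {b : OrthonormalBasis ι 𝕜 E} {b' : OrthonormalBasis ι' 𝕜 E} {μ : ι → ℝ} {μ' : ι' → ℝ}
    (hb : ∀ j, T (b j) = (μ j : 𝕜) • b j) (hb' : ∀ j, T' (b' j) = (μ' j : 𝕜) • b' j)
    {S : Finset ι} {S' : Finset ι'} {a a' : ℝ} (hS : ∀ j ∈ S, μ j ≤ a) (hS' : ∀ j ∈ S', a' ≤ μ' j)
    (hcard : finrank 𝕜 E < #S + #S') : a' ≤ a + ‖T' - T‖ := by
  obtain ⟨v, hvS, hvS', hv⟩ : ∃ v ∈ span 𝕜 (b '' S), v ∈ span 𝕜 (b' '' S') ∧ v ≠ 0 := by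
    by_contra! h
    have := finrank_add_finrank_le_of_disjoint (disjoint_def.2 h)
    rw [b.finrank_span_image, b'.finrank_span_image] at this
    omega
  have hlower := hT'.le_re_inner_apply_self_of_mem_span hb' hS' hvS'
  have hupper := hT.re_inner_apply_self_le_of_mem_span hb hS hvS
  have hdiff := (T' - T).re_inner_apply_self_le v
  rw [ContinuousLinearMap.coe_coe] at hlower hupper
  rw [_root_.sub_apply, inner_sub_right, map_sub] at hdiff
  refine le_of_mul_le_mul_right ?_ (by positivity : 0 < ‖v‖ ^ 2)
  linarith

namespace Tuple

variable {n : ℕ} {α : Type*} [LinearOrder α]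

lemma succ_le_card_filter_le_sort (f : Fin n → α) (i : Fin n) :
    i + 1 ≤ #{j | f j ≤ f (sort f i)} := by
  rw [← Fin.card_Iic]
  refine card_le_card_of_injOn (sort f) (fun j hj => ?_) (sort f).injective.injOn
  simpa using monotone_sort f (mem_Iic.1 hj)

lemma sub_le_card_filter_sort_le (f : Fin n → α) (i : Fin n) :
    n - i ≤ #{j | f (sort f i) ≤ f j} := by
  rw [← Fin.card_Ici]
  refine card_le_card_of_injOn (sort f) (fun j hj => ?_) (sort f).injective.injOn
  simpa using monotone_sort f (mem_Ici.1 hj)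

end Tuple

namespace Matrix.IsHermitian

variable {𝕜 n : Type*} [RCLike 𝕜] [Fintype n] [DecidableEq n] {A B : Matrix n n 𝕜}

lemma isSymmetric_toEuclideanCLM (hA : A.IsHermitian) :
    (toEuclideanCLM (𝕜 := 𝕜) A : EuclideanSpace 𝕜 n →ₗ[𝕜] EuclideanSpace 𝕜 n).IsSymmetric :=
  isSymmetric_toEuclideanLin_iff.2 hA

lemma toEuclideanCLM_eigenvectorBasis (hA : A.IsHermitian) (j : n) :
    toEuclideanCLM (𝕜 := 𝕜) A (hA.eigenvectorBasis j) =
      (hA.eigenvalues j : 𝕜) • hA.eigenvectorBasis j := by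
  apply WithLp.ofLp_injective 2
  rw [ofLp_toEuclideanCLM, hA.mulVec_eigenvectorBasis, WithLp.ofLp_smul,
    RCLike.real_smul_eq_coe_smul (K := 𝕜)]

lemma ithEig_le_ithEig_add_norm_sub (hA : A.IsHermitian) (hB : B.IsHermitian)
    (i : Fin (Fintype.card n)) : ithEig hB i ≤ ithEig hA i + ‖B - A‖ := by
  set e := Fintype.equivFin n
  have hcardA : i + 1 ≤ #{j | (hA.eigenvalues ∘ e.symm) j ≤ ithEig hA i} :=
    Tuple.succ_le_card_filter_le_sort _ i
  have hcardB : Fintype.card n - i ≤ #{j | ithEig hB i ≤ (hB.eigenvalues ∘ e.symm) j} :=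
    Tuple.sub_le_card_filter_sort_le _ i
  rw [← l2_opNorm_toEuclideanCLM, map_sub]
  refine le_add_norm_sub_of_card_add_card_gt hA.isSymmetric_toEuclideanCLM
    hB.isSymmetric_toEuclideanCLM (b := hA.eigenvectorBasis.reindex e)
    (b' := hB.eigenvectorBasis.reindex e) (μ := hA.eigenvalues ∘ e.symm)
    (μ' := hB.eigenvalues ∘ e.symm) (S := {j | (hA.eigenvalues ∘ e.symm) j ≤ ithEig hA i})
    (S' := {j | ithEig hB i ≤ (hB.eigenvalues ∘ e.symm) j})
    (fun j => by simpa using hA.toEuclideanCLM_eigenvectorBasis _)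
    (fun j => by simpa using hB.toEuclideanCLM_eigenvectorBasis _)
    (fun j hj => (mem_filter.1 hj).2) (fun j hj => (mem_filter.1 hj).2) ?_
  rw [finrank_euclideanSpace]
  omega

lemma abs_ithEig_sub_ithEig_le (hA : A.IsHermitian) (hB : B.IsHermitian)
    (i : Fin (Fintype.card n)) : |ithEig hB i - ithEig hA i| ≤ ‖B - A‖ := by
  have := hA.ithEig_le_ithEig_add_norm_sub hB i
  have := hB.ithEig_le_ithEig_add_norm_sub hA i
  rw [← norm_neg, neg_sub] at this
  exact abs_sub_le_iff.2 ⟨by linarith, by linarith⟩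

end Matrix.IsHermitian

lemma iInf_abs_sub_le_iInf_abs_sub_add {ι : Type*} [Finite ι] (f : ι → ℝ) (a b : ℝ) :
    ⨅ j, |a - f j| ≤ (⨅ j, |b - f j|) + |a - b| := by
  rcases isEmpty_or_nonempty ι with hι | hι
  · simp [Real.iInf_of_isEmpty]
  · rw [← sub_le_iff_le_add]
    refine le_ciInf fun j => ?_
    linarith [ciInf_le (Finite.bddBelow_range fun j => |a - f j|) j, abs_sub_le a b (f j)]

lemma norm_smul_le_of_mem_Icc {𝕜 E : Type*} [RCLike 𝕜] [SeminormedAddCommGroup E] [Module 𝕜 E]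
    [NormSMulClass 𝕜 E] [Module ℝ E] [IsScalarTower ℝ 𝕜 E] {t : ℝ} (ht : t ∈ Set.Icc (0 : ℝ) 1)
    (x : E) : ‖t • x‖ ≤ ‖x‖ := by
  rw [RCLike.real_smul_eq_coe_smul (K := 𝕜), norm_smul, RCLike.norm_ofReal, abs_of_nonneg ht.1]
  exact mul_le_of_le_one_left (norm_nonneg x) ht.2

section Blocks

open WithLp

variable {𝕜 m n : Type*} [RCLike 𝕜] [Fintype m] [Fintype n]

lemma euclNorm_eq_norm_toLp_s1 (x : n → 𝕜) : euclNorm x = ‖toLp 2 x‖ := by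
  rw [EuclideanSpace.norm_eq]
  rfl

lemma norm_toLp_sum_elim_sq (x : m → 𝕜) (y : n → 𝕜) :
    ‖toLp 2 (Sum.elim x y)‖ ^ 2 = ‖toLp 2 x‖ ^ 2 + ‖toLp 2 y‖ ^ 2 := by
  simp only [EuclideanSpace.norm_sq_eq, Fintype.sum_sum_type]
  rfl

lemma norm_toLp_le_norm_toLp_sum_elim_left (x : m → 𝕜) (y : n → 𝕜) :
    ‖toLp 2 x‖ ≤ ‖toLp 2 (Sum.elim x y)‖ := by
  refine (pow_le_pow_iff_left₀ (norm_nonneg _) (norm_nonneg _) two_ne_zero).1 ?_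
  rw [norm_toLp_sum_elim_sq]
  exact le_add_of_nonneg_right (by positivity)

lemma norm_toLp_le_norm_toLp_sum_elim_right (x : m → 𝕜) (y : n → 𝕜) :
    ‖toLp 2 y‖ ≤ ‖toLp 2 (Sum.elim x y)‖ := by
  refine (pow_le_pow_iff_left₀ (norm_nonneg _) (norm_nonneg _) two_ne_zero).1 ?_
  rw [norm_toLp_sum_elim_sq]
  exact le_add_of_nonneg_left (by positivity)

lemma norm_toLp_sum_elim_zero_left (y : n → 𝕜) :
    ‖toLp 2 (Sum.elim (0 : m → 𝕜) y)‖ = ‖toLp 2 y‖ := by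
  rw [← sq_eq_sq₀ (norm_nonneg _) (norm_nonneg _), norm_toLp_sum_elim_sq]
  simp

variable [DecidableEq n]

lemma specNorm_eq_norm (M : Matrix m n 𝕜) : specNorm M = ‖M‖ := rfl

lemma Matrix.norm_toLp_mulVec_le (M : Matrix m n 𝕜) (x : n → 𝕜) :
    ‖toLp 2 (M *ᵥ x)‖ ≤ ‖M‖ * ‖toLp 2 x‖ :=
  M.l2_opNorm_mulVec (toLp 2 x)

variable [DecidableEq m]

lemma Matrix.norm_le_norm_fromBlocks (A : Matrix m m 𝕜) (B : Matrix m n 𝕜) (C : Matrix n m 𝕜)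
    (D : Matrix n n 𝕜) : ‖D‖ ≤ ‖fromBlocks A B C D‖ := by
  rw [l2_opNorm_def D]
  refine ContinuousLinearMap.opNorm_le_bound _ (norm_nonneg _) fun y => ?_
  simp only [LinearEquiv.trans_apply, LinearMap.coe_toContinuousLinearMap']
  calc ‖toLp 2 (D *ᵥ ofLp y)‖
      ≤ ‖toLp 2 (fromBlocks A B C D *ᵥ Sum.elim 0 (ofLp y))‖ := by
        rw [fromBlocks_mulVec, Sum.elim_comp_inl, Sum.elim_comp_inr, mulVec_zero, zero_add,
          mulVec_zero, zero_add]
        exact norm_toLp_le_norm_toLp_sum_elim_right _ _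
    _ ≤ ‖fromBlocks A B C D‖ * ‖y‖ := by
        simpa [norm_toLp_sum_elim_zero_left] using
          (fromBlocks A B C D).norm_toLp_mulVec_le (Sum.elim 0 (ofLp y))

theorem Matrix.IsHermitian.iInf_abs_sub_eigenvalues_mul_norm_le {B₁₁ : Matrix m m 𝕜}
    {B₁₂ : Matrix m n 𝕜} {B₂₁ : Matrix n m 𝕜} {B₂₂ D : Matrix n n 𝕜} (hD : D.IsHermitian)
    {x : m → 𝕜} {y : n → 𝕜} {μ : ℝ}
    (h : Matrix.fromBlocks B₁₁ B₁₂ B₂₁ B₂₂ *ᵥ Sum.elim x y = (μ : 𝕜) • Sum.elim x y) :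
    (⨅ j, |μ - hD.eigenvalues j|) * ‖toLp 2 y‖ ≤
      ‖B₂₁‖ * ‖toLp 2 x‖ + ‖B₂₂ - D‖ * ‖toLp 2 y‖ := by
  have hrow : B₂₁ *ᵥ x + B₂₂ *ᵥ y = (μ : 𝕜) • y := by
    funext j
    simpa [fromBlocks_mulVec] using congrFun h (Sum.inr j)
  have hresidual : toEuclideanCLM (𝕜 := 𝕜) D (toLp 2 y) - (μ : 𝕜) • toLp 2 y =
      -(toLp 2 (B₂₁ *ᵥ x) + toLp 2 ((B₂₂ - D) *ᵥ y)) := by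
    apply ofLp_injective 2
    simp only [ofLp_sub, ofLp_toEuclideanCLM, ofLp_smul, ofLp_neg, ofLp_add, sub_mulVec,
      ← hrow]
    abel
  calc (⨅ j, |μ - hD.eigenvalues j|) * ‖toLp 2 y‖
      ≤ ‖toEuclideanCLM (𝕜 := 𝕜) D (toLp 2 y) - (μ : 𝕜) • toLp 2 y‖ :=
        hD.isSymmetric_toEuclideanCLM.iInf_abs_sub_mul_norm_le hD.toEuclideanCLM_eigenvectorBasis
          μ _
    _ ≤ ‖toLp 2 (B₂₁ *ᵥ x)‖ + ‖toLp 2 ((B₂₂ - D) *ᵥ y)‖ := by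
        rw [hresidual, norm_neg]
        exact norm_add_le _ _
    _ ≤ ‖B₂₁‖ * ‖toLp 2 x‖ + ‖B₂₂ - D‖ * ‖toLp 2 y‖ :=
        add_le_add (B₂₁.norm_toLp_mulVec_le x) ((B₂₂ - D).norm_toLp_mulVec_le y)

theorem Matrix.IsHermitian.iInf_abs_sub_eigenvalues_mul_norm_le_of_add_smul
    {A₁₁ E₁₁ : Matrix m m 𝕜} {A₁₂ E₁₂ : Matrix m n 𝕜} {A₂₁ E₂₁ : Matrix n m 𝕜}
    {A₂₂ E₂₂ : Matrix n n 𝕜} (hA₂₂ : A₂₂.IsHermitian) {t : ℝ} (ht : t ∈ Set.Icc (0 : ℝ) 1)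
    {x : m → 𝕜} {y : n → 𝕜} {μ : ℝ}
    (h : (Matrix.fromBlocks A₁₁ A₁₂ A₂₁ A₂₂ + t • Matrix.fromBlocks E₁₁ E₁₂ E₂₁ E₂₂) *ᵥ
      Sum.elim x y = (μ : 𝕜) • Sum.elim x y)
    (hunit : ‖toLp 2 (Sum.elim x y)‖ = 1) :
    (⨅ j, |μ - hA₂₂.eigenvalues j|) * ‖toLp 2 y‖ ≤
      ‖A₂₁‖ + ‖E₂₁‖ + ‖Matrix.fromBlocks E₁₁ E₁₂ E₂₁ E₂₂‖ * ‖toLp 2 y‖ := by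
  rw [Matrix.fromBlocks_smul, Matrix.fromBlocks_add] at h
  have hx : ‖toLp 2 x‖ ≤ 1 := hunit ▸ norm_toLp_le_norm_toLp_sum_elim_left x y
  have h₂₁ : ‖A₂₁ + t • E₂₁‖ ≤ ‖A₂₁‖ + ‖E₂₁‖ :=
    (norm_add_le _ _).trans (add_le_add le_rfl (norm_smul_le_of_mem_Icc (𝕜 := 𝕜) ht _))
  have h₂₂ : ‖A₂₂ + t • E₂₂ - A₂₂‖ ≤ ‖Matrix.fromBlocks E₁₁ E₁₂ E₂₁ E₂₂‖ := by
    rw [add_sub_cancel_left]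
    exact (norm_smul_le_of_mem_Icc (𝕜 := 𝕜) ht _).trans (Matrix.norm_le_norm_fromBlocks _ _ _ _)
  calc (⨅ j, |μ - hA₂₂.eigenvalues j|) * ‖toLp 2 y‖
      ≤ ‖A₂₁ + t • E₂₁‖ * ‖toLp 2 x‖ + ‖A₂₂ + t • E₂₂ - A₂₂‖ * ‖toLp 2 y‖ :=
        hA₂₂.iInf_abs_sub_eigenvalues_mul_norm_le h
    _ ≤ (‖A₂₁‖ + ‖E₂₁‖) * 1 + ‖Matrix.fromBlocks E₁₁ E₁₂ E₂₁ E₂₂‖ * ‖toLp 2 y‖ := by gcongr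
    _ = _ := by rw [mul_one]

end Blocks

/-- Eigenvector tail bound along the homotopy A + tE. -/
theorem stmt_1 {m k : ℕ}
    (A11 : Matrix (Fin m) (Fin m) ℂ) (A21 : Matrix (Fin k) (Fin m) ℂ)
    (A22 : Matrix (Fin k) (Fin k) ℂ)
    (E11 : Matrix (Fin m) (Fin m) ℂ) (E21 : Matrix (Fin k) (Fin m) ℂ)
    (E22 : Matrix (Fin k) (Fin k) ℂ)
    (A : Matrix (Fin m ⊕ Fin k) (Fin m ⊕ Fin k) ℂ) (hAdef : A = fromBlocks A11 A21ᴴ A21 A22)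
    (E : Matrix (Fin m ⊕ Fin k) (Fin m ⊕ Fin k) ℂ) (hEdef : E = fromBlocks E11 E21ᴴ E21 E22)
    (hA : A.IsHermitian) (hA22 : A22.IsHermitian)
    (htE : ∀ t : ℝ, (A + t • E).IsHermitian)
    (i : Fin (Fintype.card (Fin m ⊕ Fin k)))
    (hgap : (⨅ j, |ithEig hA i - hA22.eigenvalues j|) > 2 * specNorm E)
    (x1 : ℝ → (Fin m → ℂ)) (x2 : ℝ → (Fin k → ℂ))
    (heig : ∀ t ∈ Set.Icc (0:ℝ) 1,
      (A + t • E).mulVec (Sum.elim (x1 t) (x2 t))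
        = ((ithEig (htE t) i : ℝ) : ℂ) • Sum.elim (x1 t) (x2 t))
    (hunit : ∀ t ∈ Set.Icc (0:ℝ) 1, euclNorm (Sum.elim (x1 t) (x2 t)) = 1) :
    ∀ t ∈ Set.Icc (0:ℝ) 1,
      euclNorm (x2 t) ≤ (specNorm A21 + specNorm E21) /
        ((⨅ j, |ithEig hA i - hA22.eigenvalues j|) - 2 * specNorm E) := by
  intro t ht
  have hweyl : |ithEig (htE t) i - ithEig hA i| ≤ specNorm E :=
    (hA.abs_ithEig_sub_ithEig_le (htE t) i).trans
      (by rw [add_sub_cancel_left]; exact norm_smul_le_of_mem_Icc (𝕜 := ℂ) ht E)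
  have hgap_t : (⨅ j, |ithEig hA i - hA22.eigenvalues j|) - specNorm E ≤
      ⨅ j, |ithEig (htE t) i - hA22.eigenvalues j| := by
    rw [abs_sub_comm] at hweyl
    linarith [iInf_abs_sub_le_iInf_abs_sub_add hA22.eigenvalues (ithEig hA i) (ithEig (htE t) i)]
  subst hAdef hEdef
  have htail := hA22.iInf_abs_sub_eigenvalues_mul_norm_le_of_add_smul ht
    (μ := ithEig (htE t) i) (heig t ht)
    ((euclNorm_eq_norm_toLp_s1 _).symm.trans (hunit t ht))
  simp only [specNorm_eq_norm, euclNorm_eq_norm_toLp_s1] at hgap hgap_t ⊢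
  rw [le_div_iff₀ (by linarith [norm_nonneg (fromBlocks E11 E21ᴴ E21 E22)])]
  nlinarith [mul_le_mul_of_nonneg_right hgap_t (norm_nonneg (WithLp.toLp 2 (x2 t)))]
end

section
/- Let A and Â be Hermitian matrices of the form A = [[A1, 0],[0, A2]] and Â = [[A1, E^H],[E, A2]], where A2 is k×k. If λ_i(A), the i-th smallest eigenvalue of A, is not an eigenvalue of A2, then |λ_i(A) − λ_i(Â)| ≤ ‖E‖₂² / min_j |λ_i(A) − λ_j(A2)|. -/
/-!
Write `c_H(t)` for the number of eigenvalues of a Hermitian `H` below `t`, so that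
`λ_i(H) < t ↔ i < c_H(t)`. The eigenvectors split the space into a subspace of dimension `c_H(t)`
on which the shifted form `⟪x, H x⟫ - t‖x‖²` is negative definite and a complement on which it is
nonnegative; hence any linear change of variables comparing such forms compares eigenvalue counts.

For `t` not an eigenvalue of `A₂`, the shear `(x, y) ↦ (x, y - v)` with `v = (A₂ - t)⁻¹ E x`
turns the shifted form of `Â` into `q_{A₁}(x) - q_{A₂}(v) + q_{A₂}(y)` (a Schur complement). If the
eigenvalues of `A₂` above `t` exceed it by at least `δ`, then `q_{A₂}(v) ≤ ‖E x‖²/δ`, whence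
`c_Â(t) ≤ c_{A₁}(t + ‖E‖²/δ) + c_{A₂}(t)`; symmetrically below `t`. Taking for `δ` the distance
from `λ_i(A)` to the spectrum of `A₂` and `t` just beyond `λ_i(A) ∓ ‖E‖²/δ`, these bounds and
`c_A = c_{A₁} + c_{A₂}` trap `λ_i(Â)` within `‖E‖²/δ` of `λ_i(A)`, provided `‖E‖²/δ < δ`.
Otherwise `δ ≤ ‖E‖`, and Weyl's bound `|λ_i(A) - λ_i(Â)| ≤ ‖E‖ ≤ ‖E‖²/δ`, obtained from the
unsheared form, suffices.
-/

open Matrix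

open Module Finset ComplexConjugate
open scoped InnerProductSpace

section Counting

variable {I : Type*} [Fintype I] [DecidableEq I]

noncomputable def shiftedForm (H : Matrix I I ℂ) (t : ℝ) (x : EuclideanSpace ℂ I) : ℝ :=
  (⟪x, toEuclideanLin H x⟫_ℂ).re - t * ‖x‖ ^ 2

lemma shiftedForm_add (H : Matrix I I ℂ) (t s : ℝ) (x : EuclideanSpace ℂ I) :
    shiftedForm H (t + s) x = shiftedForm H t x - s * ‖x‖ ^ 2 := by
  unfold shiftedForm; ring

noncomputable def shiftedLin (H : Matrix I I ℂ) (t : ℝ) : Module.End ℂ (EuclideanSpace ℂ I) :=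
  toEuclideanLin H - (t : ℂ) • 1

lemma shiftedLin_apply (H : Matrix I I ℂ) (t : ℝ) (x : EuclideanSpace ℂ I) :
    shiftedLin H t x = toEuclideanLin H x - (t : ℂ) • x := rfl

lemma shiftedForm_eq_re_inner_shiftedLin (H : Matrix I I ℂ) (t : ℝ) (x : EuclideanSpace ℂ I) :
    shiftedForm H t x = (⟪x, shiftedLin H t x⟫_ℂ).re := by
  rw [shiftedForm, shiftedLin_apply, inner_sub_right, inner_smul_right, inner_self_eq_norm_sq_to_K,
    Complex.sub_re, Complex.re_ofReal_mul]
  norm_cast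

@[simp]
lemma shiftedForm_zero (H : Matrix I I ℂ) (t : ℝ) : shiftedForm H t 0 = 0 := by
  simp [shiftedForm]

noncomputable def eigCountLT {H : Matrix I I ℂ} (hH : H.IsHermitian) (t : ℝ) : ℕ :=
  #{j | hH.eigenvalues j < t}

lemma eigCountLT_mono {H : Matrix I I ℂ} (hH : H.IsHermitian) : Monotone (eigCountLT hH) :=
  fun _ _ hst => card_le_card <| monotone_filter_right _ fun _ _ hj => hj.trans_le hst

lemma Submodule.finrank_add_finrank_le_of_neg_of_nonneg {V : Type*} [AddCommGroup V]
    [Module ℂ V] [FiniteDimensional ℂ V] {q : V → ℝ} {W P : Submodule ℂ V}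
    (hW : ∀ x ∈ W, x ≠ 0 → q x < 0) (hP : ∀ x ∈ P, 0 ≤ q x) :
    finrank ℂ W + finrank ℂ P ≤ finrank ℂ V :=
  Submodule.finrank_add_finrank_le_of_disjoint <| Submodule.disjoint_def.2 fun x hxW hxP =>
    by_contra fun hx => (hW x hxW hx).not_ge (hP x hxP)

namespace Matrix.IsHermitian

variable {H : Matrix I I ℂ} (hH : H.IsHermitian)

lemma inner_eigenvectorBasis_toEuclideanLin (j : I) (x : EuclideanSpace ℂ I) :
    ⟪hH.eigenvectorBasis j, toEuclideanLin H x⟫_ℂ =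
      hH.eigenvalues j * ⟪hH.eigenvectorBasis j, x⟫_ℂ := by
  have hsymm := isSymmetric_toEuclideanLin_iff.mpr hH
  have hev : toEuclideanLin H (hH.eigenvectorBasis j) =
      (hH.eigenvalues j : ℂ) • hH.eigenvectorBasis j := by
    ext i
    simpa [toLpLin_apply] using congr_fun (hH.mulVec_eigenvectorBasis j) i
  rw [← hsymm, hev, inner_smul_left, Complex.conj_ofReal]

lemma shiftedForm_eq_sum (t : ℝ) (x : EuclideanSpace ℂ I) :
    shiftedForm H t x = ∑ j, (hH.eigenvalues j - t) * ‖⟪hH.eigenvectorBasis j, x⟫_ℂ‖ ^ 2 := by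
  have hre : ∀ j, (⟪x, hH.eigenvectorBasis j⟫_ℂ * ⟪hH.eigenvectorBasis j, toEuclideanLin H x⟫_ℂ).re
      = hH.eigenvalues j * ‖⟪hH.eigenvectorBasis j, x⟫_ℂ‖ ^ 2 := by
    intro j
    rw [inner_eigenvectorBasis_toEuclideanLin, ← inner_conj_symm, mul_left_comm,
      RCLike.conj_mul, Complex.re_ofReal_mul]
    norm_cast
  rw [shiftedForm, ← hH.eigenvectorBasis.sum_inner_mul_inner x, Complex.re_sum,
    ← hH.eigenvectorBasis.sum_sq_norm_inner_right x, mul_sum, ← sum_sub_distrib]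
  simp_rw [hre, sub_mul]

noncomputable def eigSpan (s : Finset I) : Submodule ℂ (EuclideanSpace ℂ I) :=
  Submodule.span ℂ (Set.range fun j : s => hH.eigenvectorBasis j)

lemma finrank_eigSpan (s : Finset I) : finrank ℂ (hH.eigSpan s) = #s := by
  rw [eigSpan, finrank_span_eq_card, Fintype.card_coe]
  exact hH.eigenvectorBasis.orthonormal.linearIndependent.comp _ Subtype.val_injective

lemma inner_eigenvectorBasis_eq_zero_of_mem_eigSpan {s : Finset I} {j : I} (hj : j ∉ s)
    {x : EuclideanSpace ℂ I} (hx : x ∈ hH.eigSpan s) : ⟪hH.eigenvectorBasis j, x⟫_ℂ = 0 := by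
  rw [← Submodule.mem_orthogonal_singleton_iff_inner_right]
  refine Submodule.span_le.2 ?_ hx
  rintro _ ⟨⟨j', hj'⟩, rfl⟩
  rw [SetLike.mem_coe, Submodule.mem_orthogonal_singleton_iff_inner_right,
    hH.eigenvectorBasis.orthonormal.inner_eq_zero (ne_of_mem_of_not_mem hj' hj).symm]

lemma shiftedForm_neg_of_mem_eigSpan {t : ℝ} {x : EuclideanSpace ℂ I}
    (hx : x ∈ hH.eigSpan {j | hH.eigenvalues j < t}) (hx0 : x ≠ 0) : shiftedForm H t x < 0 := by
  have hcoef : ∀ j, t ≤ hH.eigenvalues j → ⟪hH.eigenvectorBasis j, x⟫_ℂ = 0 := fun j hj =>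
    hH.inner_eigenvectorBasis_eq_zero_of_mem_eigSpan (by simpa using hj) hx
  have hterm : ∀ j, (hH.eigenvalues j - t) * ‖⟪hH.eigenvectorBasis j, x⟫_ℂ‖ ^ 2 ≤ 0 := by
    intro j
    rcases lt_or_ge (hH.eigenvalues j) t with hj | hj
    · exact mul_nonpos_of_nonpos_of_nonneg (by linarith) (by positivity)
    · simp [hcoef j hj]
  rw [hH.shiftedForm_eq_sum]
  refine (sum_nonpos fun j _ => hterm j).lt_of_ne fun hsum => hx0 ?_
  rw [sum_eq_zero_iff_of_nonpos fun j _ => hterm j] at hsum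
  rw [← norm_eq_zero, ← sq_eq_zero_iff, ← hH.eigenvectorBasis.sum_sq_norm_inner_right]
  refine sum_eq_zero fun j hj => ?_
  rcases lt_or_ge (hH.eigenvalues j) t with hjt | hjt
  · exact (mul_eq_zero.1 (hsum j hj)).resolve_left (by linarith)
  · simp [hcoef j hjt]

lemma shiftedForm_nonpos_of_mem_eigSpan {t : ℝ} {x : EuclideanSpace ℂ I}
    (hx : x ∈ hH.eigSpan {j | hH.eigenvalues j < t}) : shiftedForm H t x ≤ 0 := by
  rcases eq_or_ne x 0 with rfl | hx0
  · simp
  · exact (hH.shiftedForm_neg_of_mem_eigSpan hx hx0).le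

lemma shiftedForm_nonneg_of_mem_eigSpan {t : ℝ} {x : EuclideanSpace ℂ I}
    (hx : x ∈ hH.eigSpan {j | t ≤ hH.eigenvalues j}) : 0 ≤ shiftedForm H t x := by
  rw [hH.shiftedForm_eq_sum]
  refine sum_nonneg fun j _ => ?_
  rcases lt_or_ge (hH.eigenvalues j) t with hj | hj
  · simp [hH.inner_eigenvectorBasis_eq_zero_of_mem_eigSpan (by simpa using hj) hx]
  · exact mul_nonneg (by linarith) (by positivity)

lemma eigCountLT_add_card_filter_ge (t : ℝ) :
    eigCountLT hH t + #{j | t ≤ hH.eigenvalues j} = Fintype.card I := by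
  simp_rw [eigCountLT, ← not_lt, card_filter_add_card_filter_not, card_univ]

lemma finrank_le_eigCountLT {t : ℝ} {W : Submodule ℂ (EuclideanSpace ℂ I)}
    (hW : ∀ x ∈ W, x ≠ 0 → shiftedForm H t x < 0) : finrank ℂ W ≤ eigCountLT hH t := by
  have := Submodule.finrank_add_finrank_le_of_neg_of_nonneg hW
    fun x hx => hH.shiftedForm_nonneg_of_mem_eigSpan (t := t) hx
  rw [finrank_eigSpan, finrank_euclideanSpace, ← hH.eigCountLT_add_card_filter_ge t] at this
  omega

lemma eigCountLT_add_finrank_le {t : ℝ} {P : Submodule ℂ (EuclideanSpace ℂ I)}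
    (hP : ∀ x ∈ P, 0 ≤ shiftedForm H t x) : eigCountLT hH t + finrank ℂ P ≤ Fintype.card I := by
  have := Submodule.finrank_add_finrank_le_of_neg_of_nonneg
    (fun x hx => hH.shiftedForm_neg_of_mem_eigSpan (t := t) hx) hP
  rwa [finrank_eigSpan, finrank_euclideanSpace] at this

lemma inner_eigenvectorBasis_shiftedLin (t : ℝ) (j : I) (x : EuclideanSpace ℂ I) :
    ⟪hH.eigenvectorBasis j, shiftedLin H t x⟫_ℂ =
      (hH.eigenvalues j - t : ℝ) * ⟪hH.eigenvectorBasis j, x⟫_ℂ := by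
  rw [shiftedLin_apply, inner_sub_right, inner_smul_right, inner_eigenvectorBasis_toEuclideanLin]
  push_cast
  ring

lemma norm_shiftedLin_sq (t : ℝ) (x : EuclideanSpace ℂ I) :
    ‖shiftedLin H t x‖ ^ 2 =
      ∑ j, (hH.eigenvalues j - t) ^ 2 * ‖⟪hH.eigenvectorBasis j, x⟫_ℂ‖ ^ 2 := by
  simp_rw [← hH.eigenvectorBasis.sum_sq_norm_inner_right (shiftedLin H t x),
    inner_eigenvectorBasis_shiftedLin, norm_mul, mul_pow, Complex.norm_real, Real.norm_eq_abs,
    sq_abs]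

lemma injective_shiftedLin {t : ℝ} (ht : ∀ j, hH.eigenvalues j ≠ t) :
    Function.Injective (shiftedLin H t) := by
  rw [← LinearMap.ker_eq_bot, LinearMap.ker_eq_bot']
  intro x hx
  rw [← norm_eq_zero, ← sq_eq_zero_iff, ← hH.eigenvectorBasis.sum_sq_norm_inner_right]
  refine sum_eq_zero fun j _ => ?_
  have := hH.inner_eigenvectorBasis_shiftedLin t j x
  rw [hx, inner_zero_right, eq_comm, mul_eq_zero] at this
  simp [this.resolve_left (by exact_mod_cast sub_ne_zero.2 (ht j))]

lemma shiftedForm_le_norm_shiftedLin_sq_div {t δ : ℝ} (hδ : 0 < δ)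
    (hgap : ∀ j, hH.eigenvalues j < t ∨ t + δ ≤ hH.eigenvalues j) (x : EuclideanSpace ℂ I) :
    shiftedForm H t x ≤ ‖shiftedLin H t x‖ ^ 2 / δ := by
  rw [hH.shiftedForm_eq_sum, hH.norm_shiftedLin_sq, sum_div]
  refine sum_le_sum fun j _ => ?_
  rw [mul_div_right_comm]
  refine mul_le_mul_of_nonneg_right ?_ (by positivity)
  rcases hgap j with hj | hj
  · exact (sub_neg.2 hj).le.trans (by positivity)
  · rw [le_div_iff₀ hδ]
    nlinarith

lemma neg_shiftedForm_le_norm_shiftedLin_sq_div {t δ : ℝ} (hδ : 0 < δ)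
    (hgap : ∀ j, hH.eigenvalues j ≤ t - δ ∨ t < hH.eigenvalues j) (x : EuclideanSpace ℂ I) :
    -shiftedForm H t x ≤ ‖shiftedLin H t x‖ ^ 2 / δ := by
  rw [hH.shiftedForm_eq_sum, hH.norm_shiftedLin_sq, sum_div, ← sum_neg_distrib]
  refine sum_le_sum fun j _ => ?_
  rw [mul_div_right_comm, ← neg_mul]
  refine mul_le_mul_of_nonneg_right ?_ (by positivity)
  rcases hgap j with hj | hj
  · rw [le_div_iff₀ hδ]
    nlinarith
  · exact (neg_neg_of_pos (sub_pos.2 hj)).le.trans (by positivity)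

end Matrix.IsHermitian

end Counting

section Transfer

variable {ι₁ ι₂ I : Type*} [Fintype ι₁] [DecidableEq ι₁] [Fintype ι₂] [DecidableEq ι₂]
  [Fintype I] [DecidableEq I] {H₁ : Matrix ι₁ ι₁ ℂ} {H₂ : Matrix ι₂ ι₂ ℂ} {H : Matrix I I ℂ}
  (h₁ : H₁.IsHermitian) (h₂ : H₂.IsHermitian) (hH : H.IsHermitian)
  (Φ : (EuclideanSpace ℂ ι₁ × EuclideanSpace ℂ ι₂) ≃ₗ[ℂ] EuclideanSpace ℂ I)

lemma eigCountLT_le_add_of_shiftedForm_le {t₁ t₂ t : ℝ}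
    (hΦ : ∀ x y, shiftedForm H₁ t₁ x + shiftedForm H₂ t₂ y ≤ shiftedForm H t (Φ (x, y))) :
    eigCountLT hH t ≤ eigCountLT h₁ t₁ + eigCountLT h₂ t₂ := by
  set P₁ := h₁.eigSpan {j | t₁ ≤ h₁.eigenvalues j}
  set P₂ := h₂.eigSpan {j | t₂ ≤ h₂.eigenvalues j}
  set f := Φ.toLinearMap ∘ₗ P₁.subtype.prodMap P₂.subtype
  have hf : Function.Injective f :=
    Φ.injective.comp (Subtype.val_injective.prodMap Subtype.val_injective)
  have hP := hH.eigCountLT_add_finrank_le (P := LinearMap.range f) <| by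
    rintro _ ⟨⟨x, y⟩, rfl⟩
    exact (add_nonneg (h₁.shiftedForm_nonneg_of_mem_eigSpan x.2)
      (h₂.shiftedForm_nonneg_of_mem_eigSpan y.2)).trans (hΦ x y)
  have hdim := Φ.finrank_eq
  rw [LinearMap.finrank_range_of_inj hf, finrank_prod, h₁.finrank_eigSpan,
    h₂.finrank_eigSpan] at hP
  rw [finrank_prod, finrank_euclideanSpace, finrank_euclideanSpace,
    finrank_euclideanSpace] at hdim
  have := h₁.eigCountLT_add_card_filter_ge t₁
  have := h₂.eigCountLT_add_card_filter_ge t₂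
  omega

lemma add_le_eigCountLT_of_le_shiftedForm {t₁ t₂ t : ℝ}
    (hΦ : ∀ x y, shiftedForm H t (Φ (x, y)) ≤ shiftedForm H₁ t₁ x + shiftedForm H₂ t₂ y) :
    eigCountLT h₁ t₁ + eigCountLT h₂ t₂ ≤ eigCountLT hH t := by
  set W₁ := h₁.eigSpan {j | h₁.eigenvalues j < t₁}
  set W₂ := h₂.eigSpan {j | h₂.eigenvalues j < t₂}
  set f := Φ.toLinearMap ∘ₗ W₁.subtype.prodMap W₂.subtype
  have hf : Function.Injective f :=
    Φ.injective.comp (Subtype.val_injective.prodMap Subtype.val_injective)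
  have hW := hH.finrank_le_eigCountLT (W := LinearMap.range f) <| by
    rintro _ ⟨⟨x, y⟩, rfl⟩ hxy
    refine (hΦ x y).trans_lt ?_
    by_cases hx : (x : EuclideanSpace ℂ ι₁) = 0
    · have hy : (y : EuclideanSpace ℂ ι₂) ≠ 0 := fun hy => hxy (by simp [f, hx, hy])
      exact add_neg_of_nonpos_of_neg (h₁.shiftedForm_nonpos_of_mem_eigSpan x.2)
        (h₂.shiftedForm_neg_of_mem_eigSpan y.2 hy)
    · exact add_neg_of_neg_of_nonpos (h₁.shiftedForm_neg_of_mem_eigSpan x.2 hx)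
        (h₂.shiftedForm_nonpos_of_mem_eigSpan y.2)
  rwa [LinearMap.finrank_range_of_inj hf, finrank_prod, h₁.finrank_eigSpan,
    h₂.finrank_eigSpan] at hW

end Transfer

lemma Monotone.lt_iff_lt_card_filter_lt {α : Type*} [LinearOrder α] {n : ℕ} {g : Fin n → α}
    (hg : Monotone g) (i : Fin n) (t : α) : g i < t ↔ i.val < #{j | g j < t} := by
  constructor
  · intro hi
    have : Iic i ⊆ ({j | g j < t} : Finset (Fin n)) := fun j hj =>
      mem_filter.2 ⟨mem_univ j, (hg (mem_Iic.1 hj)).trans_lt hi⟩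
    simpa using card_le_card this
  · intro hi
    by_contra! hti
    have : ({j | g j < t} : Finset (Fin n)) ⊆ Iio i := fun j hj =>
      mem_Iio.2 <| lt_of_not_ge fun hij => (hti.trans (hg hij)).not_gt (mem_filter.1 hj).2
    simpa using hi.trans_le (card_le_card this)

lemma ithEig_lt_iff {I : Type*} [Fintype I] [DecidableEq I] {H : Matrix I I ℂ}
    (hH : H.IsHermitian) (i : Fin (Fintype.card I)) (t : ℝ) :
    ithEig hH i < t ↔ i.val < eigCountLT hH t := by
  set f := hH.eigenvalues ∘ (Fintype.equivFin I).symm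
  change (f ∘ Tuple.sort f) i < t ↔ _
  rw [(Tuple.monotone_sort f).lt_iff_lt_card_filter_lt,
    eigCountLT, card_equiv ((Tuple.sort f).trans (Fintype.equivFin I).symm)
      (t := {j | hH.eigenvalues j < t}) fun j => by simp [f]]

lemma eigCountLT_ithEig_le {I : Type*} [Fintype I] [DecidableEq I] {H : Matrix I I ℂ}
    (hH : H.IsHermitian) (i : Fin (Fintype.card I)) : eigCountLT hH (ithEig hH i) ≤ i :=
  not_lt.1 <| mt (ithEig_lt_iff hH i _).2 (lt_irrefl _)

lemma norm_toEuclideanLin_le {I J : Type*} [Fintype I] [Fintype J] [DecidableEq J]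
    (M : Matrix I J ℂ) (x : EuclideanSpace ℂ J) : ‖toEuclideanLin M x‖ ≤ specNorm M * ‖x‖ :=
  (LinearMap.toContinuousLinearMap (toEuclideanLin M)).le_opNorm x

lemma abs_two_mul_re_inner_toEuclideanLin_le {I J : Type*} [Fintype I] [Fintype J] [DecidableEq J]
    (E : Matrix I J ℂ) (x : EuclideanSpace ℂ J) (y : EuclideanSpace ℂ I) :
    |2 * (⟪y, toEuclideanLin E x⟫_ℂ).re| ≤ specNorm E * (‖x‖ ^ 2 + ‖y‖ ^ 2) := by
  have h := calc |(⟪y, toEuclideanLin E x⟫_ℂ).re|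
      _ ≤ ‖⟪y, toEuclideanLin E x⟫_ℂ‖ := Complex.abs_re_le_norm _
      _ ≤ ‖y‖ * ‖toEuclideanLin E x‖ := norm_inner_le_norm _ _
      _ ≤ ‖y‖ * (specNorm E * ‖x‖) := by gcongr; exact norm_toEuclideanLin_le E x
  have hE : 0 ≤ specNorm E := norm_nonneg _
  rw [abs_mul, abs_two]
  nlinarith [mul_nonneg hE (sq_nonneg (‖x‖ - ‖y‖))]

lemma norm_toEuclideanLin_sq_div_le {I J : Type*} [Fintype I] [Fintype J] [DecidableEq J]
    (E : Matrix I J ℂ) {δ : ℝ} (hδ : 0 < δ) (x : EuclideanSpace ℂ J) :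
    ‖toEuclideanLin E x‖ ^ 2 / δ ≤ specNorm E ^ 2 / δ * ‖x‖ ^ 2 := by
  rw [div_mul_eq_mul_div, ← mul_pow]
  gcongr
  exact norm_toEuclideanLin_le E x

section Blocks

variable {ι₁ ι₂ : Type*} [Fintype ι₁] [Fintype ι₂]

noncomputable abbrev sumEquiv :
    (EuclideanSpace ℂ ι₁ × EuclideanSpace ℂ ι₂) ≃ₗ[ℂ] EuclideanSpace ℂ (ι₁ ⊕ ι₂) :=
  EuclideanSpace.sumEquivProd.symm.toLinearEquiv

@[simp]
lemma ofLp_sumEquiv (x : EuclideanSpace ℂ ι₁) (y : EuclideanSpace ℂ ι₂) :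
    (sumEquiv (x, y)).ofLp = Sum.elim x.ofLp y.ofLp := rfl

lemma inner_sumEquiv (x x' : EuclideanSpace ℂ ι₁) (y y' : EuclideanSpace ℂ ι₂) :
    ⟪sumEquiv (x, y), sumEquiv (x', y')⟫_ℂ = ⟪x, x'⟫_ℂ + ⟪y, y'⟫_ℂ := by
  simp [PiLp.inner_apply]

lemma norm_sumEquiv_sq (x : EuclideanSpace ℂ ι₁) (y : EuclideanSpace ℂ ι₂) :
    ‖sumEquiv (x, y)‖ ^ 2 = ‖x‖ ^ 2 + ‖y‖ ^ 2 := by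
  simp only [@norm_sq_eq_re_inner ℂ, inner_sumEquiv, map_add]

variable [DecidableEq ι₁] [DecidableEq ι₂]

lemma toEuclideanLin_fromBlocks_sumEquiv (A : Matrix ι₁ ι₁ ℂ) (B : Matrix ι₁ ι₂ ℂ)
    (C : Matrix ι₂ ι₁ ℂ) (D : Matrix ι₂ ι₂ ℂ) (x : EuclideanSpace ℂ ι₁)
    (y : EuclideanSpace ℂ ι₂) :
    toEuclideanLin (fromBlocks A B C D) (sumEquiv (x, y)) =
      sumEquiv (toEuclideanLin A x + toEuclideanLin B y,
        toEuclideanLin C x + toEuclideanLin D y) := by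
  rw [toEuclideanLin, toLpLin_apply, ofLp_sumEquiv, fromBlocks_mulVec]
  ext (i | i) <;> simp [toLpLin_apply]

lemma shiftedForm_fromBlocks_sumEquiv (A₁ : Matrix ι₁ ι₁ ℂ) (A₂ : Matrix ι₂ ι₂ ℂ)
    (E : Matrix ι₂ ι₁ ℂ) (t : ℝ) (x : EuclideanSpace ℂ ι₁) (y : EuclideanSpace ℂ ι₂) :
    shiftedForm (fromBlocks A₁ Eᴴ E A₂) t (sumEquiv (x, y)) =
      shiftedForm A₁ t x + 2 * (⟪y, toEuclideanLin E x⟫_ℂ).re + shiftedForm A₂ t y := by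
  have hadj : ⟪x, toEuclideanLin Eᴴ y⟫_ℂ = conj ⟪y, toEuclideanLin E x⟫_ℂ := by
    rw [toEuclideanLin_conjTranspose_eq_adjoint, LinearMap.adjoint_inner_right, inner_conj_symm]
  simp only [shiftedForm, toEuclideanLin_fromBlocks_sumEquiv, inner_sumEquiv, norm_sumEquiv_sq,
    inner_add_right, hadj, Complex.add_re, Complex.conj_re]
  ring

lemma shiftedForm_fromBlocks_zero_sumEquiv (A₁ : Matrix ι₁ ι₁ ℂ) (A₂ : Matrix ι₂ ι₂ ℂ) (t : ℝ)
    (x : EuclideanSpace ℂ ι₁) (y : EuclideanSpace ℂ ι₂) :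
    shiftedForm (fromBlocks A₁ 0 0 A₂) t (sumEquiv (x, y)) =
      shiftedForm A₁ t x + shiftedForm A₂ t y := by
  simpa using shiftedForm_fromBlocks_sumEquiv A₁ A₂ 0 t x y

lemma shiftedForm_fromBlocks_sumEquiv_sub {A₁ : Matrix ι₁ ι₁ ℂ} {A₂ : Matrix ι₂ ι₂ ℂ}
    (h₂ : A₂.IsHermitian) {E : Matrix ι₂ ι₁ ℂ} {t : ℝ} {x : EuclideanSpace ℂ ι₁}
    {v : EuclideanSpace ℂ ι₂} (hv : shiftedLin A₂ t v = toEuclideanLin E x)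
    (y : EuclideanSpace ℂ ι₂) :
    shiftedForm (fromBlocks A₁ Eᴴ E A₂) t (sumEquiv (x, y - v)) =
      shiftedForm A₁ t x - shiftedForm A₂ t v + shiftedForm A₂ t y := by
  have hsymm : ⟪v, shiftedLin A₂ t y⟫_ℂ = conj ⟪y, shiftedLin A₂ t v⟫_ℂ := by
    rw [inner_conj_symm, shiftedLin_apply, shiftedLin_apply, inner_sub_left, inner_sub_right,
      inner_smul_left, inner_smul_right, Complex.conj_ofReal,
      isSymmetric_toEuclideanLin_iff.mpr h₂]
  simp only [shiftedForm_fromBlocks_sumEquiv, shiftedForm_eq_re_inner_shiftedLin A₂, ← hv,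
    map_sub, inner_sub_left, inner_sub_right, hsymm, Complex.sub_re, Complex.conj_re]
  ring

lemma exists_linearEquiv_shiftedForm_fromBlocks (A₁ : Matrix ι₁ ι₁ ℂ) {A₂ : Matrix ι₂ ι₂ ℂ}
    (h₂ : A₂.IsHermitian) (E : Matrix ι₂ ι₁ ℂ) {t : ℝ} (ht : ∀ j, h₂.eigenvalues j ≠ t) :
    ∃ Φ : (EuclideanSpace ℂ ι₁ × EuclideanSpace ℂ ι₂) ≃ₗ[ℂ] EuclideanSpace ℂ (ι₁ ⊕ ι₂),
      ∀ x y, ∃ v, shiftedLin A₂ t v = toEuclideanLin E x ∧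
        shiftedForm (fromBlocks A₁ Eᴴ E A₂) t (Φ (x, y)) =
          shiftedForm A₁ t x - shiftedForm A₂ t v + shiftedForm A₂ t y := by
  set S := LinearEquiv.ofInjectiveEndo _ (h₂.injective_shiftedLin ht)
  refine ⟨(LinearEquiv.skewProd (.refl ℂ _) (.refl ℂ _)
    (-(S.symm.toLinearMap ∘ₗ toEuclideanLin E))).trans sumEquiv, fun x y => ?_⟩
  refine ⟨S.symm (toEuclideanLin E x), S.apply_symm_apply _, ?_⟩
  rw [← shiftedForm_fromBlocks_sumEquiv_sub h₂ (S.apply_symm_apply _)]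
  simp [sub_eq_add_neg]

variable {A₁ : Matrix ι₁ ι₁ ℂ} {A₂ : Matrix ι₂ ι₂ ℂ} {E : Matrix ι₂ ι₁ ℂ}
  (h₁ : A₁.IsHermitian) (h₂ : A₂.IsHermitian)

lemma eigCountLT_fromBlocks_zero (h : (fromBlocks A₁ 0 0 A₂).IsHermitian) (t : ℝ) :
    eigCountLT h t = eigCountLT h₁ t + eigCountLT h₂ t :=
  le_antisymm
    (eigCountLT_le_add_of_shiftedForm_le h₁ h₂ h sumEquiv fun x y =>
      (shiftedForm_fromBlocks_zero_sumEquiv A₁ A₂ t x y).ge)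
    (add_le_eigCountLT_of_le_shiftedForm h₁ h₂ h sumEquiv fun x y =>
      (shiftedForm_fromBlocks_zero_sumEquiv A₁ A₂ t x y).le)

lemma eigCountLT_fromBlocks_le (h : (fromBlocks A₁ Eᴴ E A₂).IsHermitian) (t : ℝ) :
    eigCountLT h t ≤ eigCountLT h₁ (t + specNorm E) + eigCountLT h₂ (t + specNorm E) :=
  eigCountLT_le_add_of_shiftedForm_le h₁ h₂ h sumEquiv fun x y => by
    rw [shiftedForm_fromBlocks_sumEquiv, shiftedForm_add, shiftedForm_add]
    linarith [abs_le.1 (abs_two_mul_re_inner_toEuclideanLin_le E x y)]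

lemma add_le_eigCountLT_fromBlocks (h : (fromBlocks A₁ Eᴴ E A₂).IsHermitian) (t : ℝ) :
    eigCountLT h₁ (t - specNorm E) + eigCountLT h₂ (t - specNorm E) ≤ eigCountLT h t :=
  add_le_eigCountLT_of_le_shiftedForm h₁ h₂ h sumEquiv fun x y => by
    rw [shiftedForm_fromBlocks_sumEquiv, sub_eq_add_neg, shiftedForm_add, shiftedForm_add]
    linarith [abs_le.1 (abs_two_mul_re_inner_toEuclideanLin_le E x y)]

lemma eigCountLT_fromBlocks_le_of_gap (h : (fromBlocks A₁ Eᴴ E A₂).IsHermitian) {t δ : ℝ}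
    (hδ : 0 < δ) (hgap : ∀ j, h₂.eigenvalues j < t ∨ t + δ ≤ h₂.eigenvalues j) :
    eigCountLT h t ≤ eigCountLT h₁ (t + specNorm E ^ 2 / δ) + eigCountLT h₂ t := by
  have ht j : h₂.eigenvalues j ≠ t := (hgap j).elim ne_of_lt fun hj => by linarith
  obtain ⟨Φ, hΦ⟩ := exists_linearEquiv_shiftedForm_fromBlocks A₁ h₂ E ht
  refine eigCountLT_le_add_of_shiftedForm_le h₁ h₂ h Φ fun x y => ?_
  obtain ⟨v, hv, hΦv⟩ := hΦ x y
  have := h₂.shiftedForm_le_norm_shiftedLin_sq_div hδ hgap v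
  rw [hv] at this
  rw [hΦv, shiftedForm_add]
  linarith [norm_toEuclideanLin_sq_div_le E hδ x]

lemma add_le_eigCountLT_fromBlocks_of_gap (h : (fromBlocks A₁ Eᴴ E A₂).IsHermitian) {t δ : ℝ}
    (hδ : 0 < δ) (hgap : ∀ j, h₂.eigenvalues j ≤ t - δ ∨ t < h₂.eigenvalues j) :
    eigCountLT h₁ (t - specNorm E ^ 2 / δ) + eigCountLT h₂ t ≤ eigCountLT h t := by
  have ht j : h₂.eigenvalues j ≠ t := (hgap j).elim (fun hj => by linarith) ne_of_gt
  obtain ⟨Φ, hΦ⟩ := exists_linearEquiv_shiftedForm_fromBlocks A₁ h₂ E ht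
  refine add_le_eigCountLT_of_le_shiftedForm h₁ h₂ h Φ fun x y => ?_
  obtain ⟨v, hv, hΦv⟩ := hΦ x y
  have := h₂.neg_shiftedForm_le_norm_shiftedLin_sq_div hδ hgap v
  rw [hv] at this
  rw [hΦv, sub_eq_add_neg t, shiftedForm_add]
  linarith [norm_toEuclideanLin_sq_div_le E hδ x]

end Blocks

section Perturbation

variable {ι₁ ι₂ : Type*} [Fintype ι₁] [DecidableEq ι₁] [Fintype ι₂] [DecidableEq ι₂]
  {A₁ : Matrix ι₁ ι₁ ℂ} {A₂ : Matrix ι₂ ι₂ ℂ} {E : Matrix ι₂ ι₁ ℂ}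
  (h₁ : A₁.IsHermitian) (h₂ : A₂.IsHermitian) (hA : (fromBlocks A₁ 0 0 A₂).IsHermitian)
  (hÂ : (fromBlocks A₁ Eᴴ E A₂).IsHermitian) (i : Fin (Fintype.card (ι₁ ⊕ ι₂)))

lemma sub_le_ithEig_fromBlocks {r s δ : ℝ} (hrδ : r < δ) (hsr : s ≤ r)
    (hcount : ∀ t, ithEig hA i - δ < t → t < ithEig hA i - r →
      eigCountLT hÂ t ≤ eigCountLT h₁ (t + r) + eigCountLT h₂ (t + s)) :
    ithEig hA i - r ≤ ithEig hÂ i := by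
  by_contra! hlt
  obtain ⟨t, ht, htr⟩ := _root_.exists_between (max_lt hlt (by linarith : ithEig hA i - δ < _))
  rw [max_lt_iff] at ht
  have hlow := (ithEig_lt_iff hÂ i t).1 ht.1
  have hhigh := eigCountLT_ithEig_le hA i
  rw [eigCountLT_fromBlocks_zero h₁ h₂ hA] at hhigh
  have := hcount t ht.2 htr
  have := eigCountLT_mono h₁ (by linarith : t + r ≤ ithEig hA i)
  have := eigCountLT_mono h₂ (by linarith : t + s ≤ ithEig hA i)
  omega

lemma ithEig_le_add_fromBlocks {r s δ : ℝ} (hrδ : r < δ) (hsr : s ≤ r)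
    (hcount : ∀ t, ithEig hA i + r < t → t < ithEig hA i + δ →
      eigCountLT h₁ (t - r) + eigCountLT h₂ (t - s) ≤ eigCountLT hÂ t) :
    ithEig hÂ i ≤ ithEig hA i + r := by
  by_contra! hlt
  obtain ⟨t, hrt, ht⟩ :=
    _root_.exists_between (lt_min hlt (by linarith : ithEig hA i + r < ithEig hA i + δ))
  rw [lt_min_iff] at ht
  have hhigh : eigCountLT hÂ t ≤ i := not_lt.1 <| mt (ithEig_lt_iff hÂ i t).2 ht.1.not_gt
  have hlow := (ithEig_lt_iff hA i (t - r)).1 (by linarith)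
  rw [eigCountLT_fromBlocks_zero h₁ h₂ hA] at hlow
  have := hcount t hrt ht.2
  have := eigCountLT_mono h₂ (by linarith : t - r ≤ t - s)
  omega

theorem abs_ithEig_sub_ithEig_fromBlocks_le_specNorm :
    |ithEig hA i - ithEig hÂ i| ≤ specNorm E := by
  obtain ⟨h₁, -, -, h₂⟩ := isHermitian_fromBlocks_iff.1 hA
  have hε : 0 ≤ specNorm E := norm_nonneg _
  rw [abs_sub_le_iff]
  -- the count comparisons hold for every `t`, so any `δ > ‖E‖` serves
  constructor
  · linarith [sub_le_ithEig_fromBlocks h₁ h₂ hA hÂ i (lt_add_one (specNorm E)) le_rfl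
      fun t _ _ => eigCountLT_fromBlocks_le h₁ h₂ hÂ t]
  · linarith [ithEig_le_add_fromBlocks h₁ h₂ hA hÂ i (lt_add_one (specNorm E)) le_rfl
      fun t _ _ => add_le_eigCountLT_fromBlocks h₁ h₂ hÂ t]

theorem abs_ithEig_sub_ithEig_fromBlocks_le_of_gap {δ : ℝ} (hδ : 0 < δ)
    (hη : specNorm E ^ 2 / δ < δ)
    (hgap : ∀ j, h₂.eigenvalues j ≤ ithEig hA i - δ ∨ ithEig hA i + δ ≤ h₂.eigenvalues j) :
    |ithEig hA i - ithEig hÂ i| ≤ specNorm E ^ 2 / δ := by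
  obtain ⟨h₁, -, -, -⟩ := isHermitian_fromBlocks_iff.1 hA
  have hη0 : 0 ≤ specNorm E ^ 2 / δ := by positivity
  rw [abs_sub_le_iff]
  constructor
  · have := sub_le_ithEig_fromBlocks h₁ h₂ hA hÂ i hη hη0 fun t ht ht' => by
      rw [add_zero]
      refine eigCountLT_fromBlocks_le_of_gap h₁ h₂ hÂ hδ fun j => ?_
      rcases hgap j with hj | hj
      · exact .inl (by linarith)
      · exact .inr (by linarith)
    linarith
  · have := ithEig_le_add_fromBlocks h₁ h₂ hA hÂ i hη hη0 fun t ht ht' => by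
      rw [sub_zero]
      refine add_le_eigCountLT_fromBlocks_of_gap h₁ h₂ hÂ hδ fun j => ?_
      rcases hgap j with hj | hj
      · exact .inl (by linarith)
      · exact .inr (by linarith)
    linarith

end Perturbation

/-- Classical quadratic residual bound (Parlett/Mathias). -/
theorem stmt_3 {m k : ℕ}
    (A1 : Matrix (Fin m) (Fin m) ℂ) (A2 : Matrix (Fin k) (Fin k) ℂ)
    (E : Matrix (Fin k) (Fin m) ℂ)
    (hA : (fromBlocks A1 0 0 A2).IsHermitian)
    (hA2 : A2.IsHermitian)
    (hAhat : (fromBlocks A1 Eᴴ E A2).IsHermitian)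
    (i : Fin (Fintype.card (Fin m ⊕ Fin k)))
    (hsep : ∀ j, ithEig hA i ≠ hA2.eigenvalues j) :
    |ithEig hA i - ithEig hAhat i| ≤
      specNorm E ^ 2 / ⨅ j, |ithEig hA i - hA2.eigenvalues j| := by
  set δ := ⨅ j, |ithEig hA i - hA2.eigenvalues j|
  have hweyl := abs_ithEig_sub_ithEig_fromBlocks_le_specNorm hA hAhat i
  rcases isEmpty_or_nonempty (Fin k) with hk | hk
  · have hE : specNorm E = 0 := by simp [Subsingleton.elim E 0, specNorm]
    rw [hE] at hweyl ⊢
    simpa using hweyl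
  have hgap j : hA2.eigenvalues j ≤ ithEig hA i - δ ∨ ithEig hA i + δ ≤ hA2.eigenvalues j := by
    have := ciInf_le (Finite.bddBelow_range fun j => |ithEig hA i - hA2.eigenvalues j|) j
    rcases abs_cases (ithEig hA i - hA2.eigenvalues j) with h | h
    · exact .inl (by linarith)
    · exact .inr (by linarith)
  have hδ : 0 < δ := by
    obtain ⟨j, hj⟩ := exists_eq_ciInf_of_finite (f := fun j => |ithEig hA i - hA2.eigenvalues j|)
    have := abs_pos.2 (sub_ne_zero.2 (hsep j))
    rwa [hj] at this
  have hε : 0 ≤ specNorm E := norm_nonneg _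
  rcases lt_or_ge (specNorm E) δ with hεδ | hδε
  · refine abs_ithEig_sub_ithEig_fromBlocks_le_of_gap hA2 hA hAhat i hδ ?_ hgap
    rw [div_lt_iff₀ hδ]
    nlinarith
  · refine hweyl.trans ?_
    rw [le_div_iff₀ hδ]
    nlinarith
end

section
/- Let A be real symmetric tridiagonal with diagonal a_1,…,a_n and positive subdiagonals b_1,…,b_{n−1}, let λ be an eigenvalue with unit eigenvector x, and suppose that for some index m all of a_1,…,a_m satisfy |a_i − λ| > b_{i−1} + b_i (with b_0 = 0). Then the eigenvector components are increasing in magnitude along the first m+1 entries: |x_1| ≤ |x_2| ≤ … ≤ |x_{m+1}|, and moreover |x_i|/|x_{i+1}| ≤ b_i/(|a_i − λ| − b_{i−1}) < 1 for 1 ≤ i ≤ m (whenever x_{i+1} ≠ 0). -/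
/-!
Row `i` of `(A - λ) x = 0` reads `b_{i-1} x_{i-1} + (a_i - λ) x_i + b_i x_{i+1} = 0`, so
`|a_i - λ| |x_i| ≤ b_{i-1} |x_{i-1}| + b_i |x_{i+1}|`. Inductively
`b_{i-1} |x_{i-1}| ≤ b_{i-1} |x_i|` (trivial at `i = 1` since `b_0 = 0`), which turns this into
`(|a_i - λ| - b_{i-1}) |x_i| ≤ b_i |x_{i+1}|`; the Gerschgorin gap makes the factor on the left
exceed `b_i`, hence `|x_i| ≤ |x_{i+1}|`.
-/

open Matrix

/-- The n×n symmetric tridiagonal matrix with (1-based) diagonal `a 1, …, a n`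
and off-diagonal entries `b 1, …, b (n-1)`. -/
def tridiag (n : ℕ) (a b : ℕ → ℝ) : Matrix (Fin n) (Fin n) ℝ :=
  Matrix.of fun i j =>
    if (i : ℕ) = j then a ((i : ℕ) + 1)
    else if (i : ℕ) + 1 = j then b ((i : ℕ) + 1)
    else if (j : ℕ) + 1 = i then b ((j : ℕ) + 1)
    else 0

section ThreeTerm

variable {p d q u v w : ℝ}

theorem sub_mul_abs_le_of_add_add_eq_zero (h : p * u + d * v + q * w = 0)
    (hp : 0 ≤ p) (hq : 0 ≤ q) (hpu : p * |u| ≤ p * |v|) :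
    (|d| - p) * |v| ≤ q * |w| := by
  have hdv : d * v = -(p * u + q * w) := by linarith
  have : |d| * |v| ≤ p * |u| + q * |w| := by
    calc |d| * |v| = |p * u + q * w| := by rw [← abs_mul, hdv, abs_neg]
      _ ≤ |p * u| + |q * w| := abs_add_le _ _
      _ = p * |u| + q * |w| := by rw [abs_mul, abs_mul, abs_of_nonneg hp, abs_of_nonneg hq]
  linarith

theorem abs_le_abs_of_mul_abs_le {D : ℝ} (hqD : q < D) (hq : 0 ≤ q)
    (h : D * |v| ≤ q * |w|) : |v| ≤ |w| := by
  by_contra! hwv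
  nlinarith [abs_nonneg w]

end ThreeTerm

section Tridiag

variable {n : ℕ} {a b : ℕ → ℝ}

theorem tridiag_apply (i j : Fin n) :
    tridiag n a b i j =
      (if (j : ℕ) + 1 = i then b i else 0) + (if (j : ℕ) = i then a (i + 1) else 0) +
        (if (j : ℕ) = i + 1 then b (i + 1) else 0) := by
  simp only [tridiag, of_apply]
  split_ifs <;> (try simp only [add_zero, zero_add]) <;> first | omega | congr 1

theorem sum_fin_ite_val_eq {t : ℕ} (ht : t < n) (f : ℕ → ℝ) :
    (∑ j : Fin n, if (j : ℕ) = t then f j else 0) = f t := by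
  rw [Fin.sum_univ_eq_sum_range (fun j => if j = t then f j else 0), Finset.sum_ite_eq',
    if_pos (Finset.mem_range.mpr ht)]

theorem tridiag_mulVec_apply (hb0 : b 0 = 0) (x : ℕ → ℝ) {i : ℕ} (hi : i + 1 < n) :
    (tridiag n a b *ᵥ fun j : Fin n => x (j + 1)) ⟨i, by omega⟩ =
      b i * x i + a (i + 1) * x (i + 1) + b (i + 1) * x (i + 2) := by
  simp only [mulVec, dotProduct, tridiag_apply, add_mul, ite_mul, zero_mul,
    Finset.sum_add_distrib]
  rw [sum_fin_ite_val_eq (by omega) fun j => a (i + 1) * x (j + 1),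
    sum_fin_ite_val_eq hi fun j => b (i + 1) * x (j + 1)]
  congr 2
  cases i with
  | zero => simp [hb0]
  | succ k =>
    simp only [Nat.add_right_cancel_iff]
    exact sum_fin_ite_val_eq (by omega) fun j => b (k + 1) * x (j + 1)

end Tridiag

section GapChain

variable {a b x : ℕ → ℝ} {lam : ℝ} {m : ℕ}

theorem sub_mul_abs_le_of_gap (hb0 : b 0 = 0) (hb : ∀ i ≤ m, 0 ≤ b i)
    (hrec : ∀ i, 1 ≤ i → i ≤ m →
      b (i - 1) * x (i - 1) + (a i - lam) * x i + b i * x (i + 1) = 0)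
    (hgap : ∀ i, 1 ≤ i → i ≤ m → b (i - 1) + b i < |a i - lam|) :
    ∀ i, 1 ≤ i → i ≤ m → (|a i - lam| - b (i - 1)) * |x i| ≤ b i * |x (i + 1)| := by
  have step : ∀ i, 1 ≤ i → i ≤ m → b (i - 1) * |x (i - 1)| ≤ b (i - 1) * |x i| →
      (|a i - lam| - b (i - 1)) * |x i| ≤ b i * |x (i + 1)| := fun i h1 hm hprev =>
    sub_mul_abs_le_of_add_add_eq_zero (hrec i h1 hm) (hb _ (by omega)) (hb i hm) hprev
  have prev : ∀ i, 1 ≤ i → i ≤ m + 1 → b (i - 1) * |x (i - 1)| ≤ b (i - 1) * |x i| := by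
    intro i h1
    induction i, h1 using Nat.le_induction with
    | base => simp [hb0]
    | succ i h1 ih =>
      intro hm
      have key := step i h1 (by omega) (ih (by omega))
      exact mul_le_mul_of_nonneg_left
        (abs_le_abs_of_mul_abs_le (by linarith [hgap i h1 (by omega)]) (hb i (by omega)) key)
        (hb i (by omega))
  exact fun i h1 hm => step i h1 hm (prev i h1 (by omega))

end GapChain

theorem stmt_5_general (n m : ℕ) (a b : ℕ → ℝ) (hb0 : b 0 = 0)
    (hbpos : ∀ i, 1 ≤ i → i ≤ n - 1 → 0 < b i)
    (hm : m ≤ n - 1)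
    (lam : ℝ) (x : ℕ → ℝ)
    (heig : (tridiag n a b).mulVec (fun i => x ((i : ℕ) + 1))
      = lam • fun i : Fin n => x ((i : ℕ) + 1))
    (hgap : ∀ i, 1 ≤ i → i ≤ m → |a i - lam| > b (i - 1) + b i) :
    (∀ i, 1 ≤ i → i ≤ m → |x i| ≤ |x (i + 1)|) ∧
    (∀ i, 1 ≤ i → i ≤ m →
      b i / (|a i - lam| - b (i - 1)) < 1 ∧
      (x (i + 1) ≠ 0 → |x i| / |x (i + 1)| ≤ b i / (|a i - lam| - b (i - 1)))) := by
  have hb : ∀ i ≤ m, 0 ≤ b i := fun i hi => by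
    rcases Nat.eq_zero_or_pos i with rfl | hi0
    · exact hb0.ge
    · exact (hbpos i hi0 (by omega)).le
  have hrec : ∀ i, 1 ≤ i → i ≤ m →
      b (i - 1) * x (i - 1) + (a i - lam) * x i + b i * x (i + 1) = 0 := by
    rintro (_ | k) h1 hk
    · omega
    · have row := congrFun heig ⟨k, by omega⟩
      rw [tridiag_mulVec_apply hb0 x (by omega)] at row
      simp only [Pi.smul_apply, smul_eq_mul] at row
      simp only [Nat.add_sub_cancel]
      linarith
  have key := sub_mul_abs_le_of_gap hb0 hb hrec hgap
  refine ⟨fun i h1 hm => abs_le_abs_of_mul_abs_le (by linarith [hgap i h1 hm]) (hb i hm)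
    (key i h1 hm), fun i h1 hm => ?_⟩
  have hD : 0 < |a i - lam| - b (i - 1) := by linarith [hgap i h1 hm, hb i hm]
  refine ⟨(div_lt_one hD).mpr (by linarith [hgap i h1 hm]), fun hx => ?_⟩
  rw [div_le_div_iff₀ (abs_pos.mpr hx) hD]
  linarith [key i h1 hm]

/-- If an eigenvalue of a symmetric tridiagonal matrix is disjoint from the
first `m` Gerschgorin disks, the eigenvector components increase in magnitude
along the first `m+1` entries, with ratios `b i / (|a i − λ| − b (i-1)) < 1`.
The vector `x` is 1-based with `x 0 = x (n+1) = 0`, and `b 0 = 0`, `b n = 0`. -/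
theorem stmt_5 (n m : ℕ) (a b : ℕ → ℝ) (hb0 : b 0 = 0) (hbn : b n = 0)
    (hbpos : ∀ i, 1 ≤ i → i ≤ n - 1 → 0 < b i)
    (hm : m ≤ n - 1)
    (lam : ℝ) (x : ℕ → ℝ) (hx0 : x 0 = 0) (hxtop : x (n + 1) = 0)
    (heig : (tridiag n a b).mulVec (fun i => x ((i : ℕ) + 1))
      = lam • fun i : Fin n => x ((i : ℕ) + 1))
    (hunit : euclNorm (fun i : Fin n => x ((i : ℕ) + 1)) = 1)
    (hgap : ∀ i, 1 ≤ i → i ≤ m → |a i - lam| > b (i - 1) + b i) :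
    (∀ i, 1 ≤ i → i ≤ m → |x i| ≤ |x (i + 1)|) ∧
    (∀ i, 1 ≤ i → i ≤ m →
      b i / (|a i - lam| - b (i - 1)) < 1 ∧
      (x (i + 1) ≠ 0 → |x i| / |x (i + 1)| ≤ b i / (|a i - lam| - b (i - 1)))) :=
  stmt_5_general n m a b hb0 hbpos hm lam x heig hgap
end

section
/- Let n > 4 and let W_{2n+1}^+ be the Wilkinson matrix: (2n+1)×(2n+1) symmetric tridiagonal with diagonal (n, n−1, …, 1, 0, 1, …, n−1, n) and off-diagonals 1. Then the largest eigenvalue λ_max of W_{2n+1}^+ satisfies n < λ_max < n+1. -/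
/-!
Rayleigh's principle with the test vector `e₀ + e₁` gives `λ_max ≥ (2n + 1) / 2 > n`.

For the upper bound, Gershgorin's theorem only gives `λ_max ≤ n + 1`, attained by the discs of
the first two rows. A weighted Gershgorin (Collatz–Wielandt) bound removes the equality case: for
an entrywise nonnegative matrix `A` and a positive vector `w` with `A w < c w` componentwise,
every real eigenvalue has `|μ| < c`. The weights `w = (6, 5, 3, …, 3, 5, 6)` satisfy
`W⁺ w < (n + 1) w` once `n ≥ 3`.
-/

open Matrix

/-- The `(2n+1)×(2n+1)` Wilkinson matrix `W⁺_{2n+1}`: symmetric tridiagonal with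
diagonal `(n, n−1, …, 1, 0, 1, …, n−1, n)` and all off-diagonal entries 1. -/
noncomputable def wilkinson (n : ℕ) : Matrix (Fin (2 * n + 1)) (Fin (2 * n + 1)) ℝ :=
  Matrix.of fun i j =>
    if (i : ℕ) = j then |(n : ℝ) - (i : ℕ)|
    else if (i : ℕ) + 1 = j ∨ (j : ℕ) + 1 = i then 1 else 0

open Finset

namespace Matrix

variable {ι : Type*} [Fintype ι]

/-- Compare `|v|` with `w` at an index `k` maximising `|v k| / w k`. -/
theorem abs_lt_of_nonneg_of_mulVec_lt {A : Matrix ι ι ℝ} (hA : ∀ i j, 0 ≤ A i j)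
    {w : ι → ℝ} (hw : ∀ i, 0 < w i) {c : ℝ} (hAw : ∀ i, (A *ᵥ w) i < c * w i)
    {μ : ℝ} {v : ι → ℝ} (hv : v ≠ 0) (hμ : A *ᵥ v = μ • v) : |μ| < c := by
  obtain ⟨i, hi⟩ : ∃ i, v i ≠ 0 := by simpa [funext_iff] using hv
  have : Nonempty ι := ⟨i⟩
  obtain ⟨k, hk⟩ := Finite.exists_max fun j => |v j| / w j
  set r := |v k| / w k
  have hr : 0 < r := (div_pos (abs_pos.2 hi) (hw i)).trans_le (hk i)
  have hvw : ∀ j, |v j| ≤ r * w j := fun j => (div_le_iff₀ (hw j)).1 (hk j)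
  have hvk : |v k| = r * w k := by simp [r, (hw k).ne']
  have : |μ| * |v k| < c * |v k| := calc
    |μ| * |v k| = |(A *ᵥ v) k| := by rw [hμ, Pi.smul_apply, smul_eq_mul, abs_mul]
    _ ≤ ∑ j, A k j * |v j| := by
      simpa [mulVec, dotProduct, abs_mul, abs_of_nonneg (hA _ _)] using
        abs_sum_le_sum_abs (fun j => A k j * v j) univ
    _ ≤ ∑ j, A k j * (r * w j) :=
      sum_le_sum fun j _ => mul_le_mul_of_nonneg_left (hvw j) (hA k j)
    _ = r * (A *ᵥ w) k := by
      simp only [mulVec, dotProduct, mul_sum]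
      exact sum_congr rfl fun j _ => by ring
    _ < r * (c * w k) := mul_lt_mul_of_pos_left (hAw k) hr
    _ = c * |v k| := by rw [hvk]; ring
  exact lt_of_mul_lt_mul_right this (abs_nonneg _)

open scoped MatrixOrder in
theorem IsHermitian.dotProduct_mulVec_le [DecidableEq ι] {A : Matrix ι ι ℝ}
    (hA : A.IsHermitian) {c : ℝ} (hc : ∀ i, hA.eigenvalues i ≤ c) (x : ι → ℝ) :
    x ⬝ᵥ A *ᵥ x ≤ c * (x ⬝ᵥ x) := by
  have hle : A ≤ algebraMap ℝ _ c := by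
    rw [le_algebraMap_iff_spectrum_le hA.isSelfAdjoint, hA.spectrum_real_eq_range_eigenvalues]
    rintro _ ⟨i, rfl⟩
    exact hc i
  simpa [sub_mulVec, Algebra.algebraMap_eq_smul_one, smul_mulVec, dotProduct_sub] using
    (le_iff.1 hle).dotProduct_mulVec_nonneg x

end Matrix

section ithEig

variable {K : Type*} [RCLike K] {I : Type*} [Fintype I] [DecidableEq I] {A : Matrix I I K}

theorem ithEig_mem_range_eigenvalues (hA : A.IsHermitian) (i : Fin (Fintype.card I)) :
    ithEig hA i ∈ Set.range hA.eigenvalues :=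
  ⟨_, rfl⟩

theorem eigenvalues_le_ithEig_of_succ_eq_card (hA : A.IsHermitian)
    {i : Fin (Fintype.card I)} (hi : (i : ℕ) + 1 = Fintype.card I) (j : I) :
    hA.eigenvalues j ≤ ithEig hA i := by
  set f := hA.eigenvalues ∘ (Fintype.equivFin I).symm
  set σ := Tuple.sort f
  have hj : hA.eigenvalues j = (f ∘ σ) (σ.symm (Fintype.equivFin I j)) := by simp [f]
  rw [hj]
  exact Tuple.monotone_sort f (Fin.le_def.2 (by omega))

end ithEig

section Wilkinson

theorem wilkinson_nonneg (n : ℕ) (i j : Fin (2 * n + 1)) : 0 ≤ wilkinson n i j := by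
  simp only [wilkinson, of_apply]
  split_ifs <;> simp

theorem wilkinson_mulVec_apply (n : ℕ) (v : ℕ → ℝ) (i : Fin (2 * n + 1)) :
    (wilkinson n *ᵥ fun j => v j) i =
      |(n : ℝ) - i| * v i + (if (i : ℕ) < 2 * n then v (i + 1) else 0) +
        (if 0 < (i : ℕ) then v (i - 1) else 0) := by
  have hi := i.isLt
  have hsplit : ∀ k, (if (i : ℕ) = k then |(n : ℝ) - i| else
      if (i : ℕ) + 1 = k ∨ k + 1 = i then 1 else 0) * v k =
      (if k = i then |(n : ℝ) - i| * v k else 0) + (if k = i + 1 then v k else 0) +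
        (if 0 < (i : ℕ) then (if k = i - 1 then v k else 0) else 0) := by
    intro k
    split_ifs <;> first | ring1 | (exfalso; omega)
  simp only [mulVec, dotProduct, wilkinson, of_apply]
  rw [Fin.sum_univ_eq_sum_range (fun k => (if (i : ℕ) = k then |(n : ℝ) - i| else
      if (i : ℕ) + 1 = k ∨ k + 1 = i then 1 else 0) * v k), sum_congr rfl fun k _ => hsplit k,
    sum_add_distrib, sum_add_distrib, sum_ite_eq', sum_ite_eq', sum_ite_irrel,
    sum_ite_eq', sum_const_zero]
  simp only [mem_range]
  split_ifs <;> first | rfl | omega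

def wilkinsonWeight (n k : ℕ) : ℕ :=
  if min k (2 * n - k) = 0 then 6 else if min k (2 * n - k) = 1 then 5 else 3

theorem wilkinsonWeight_pos (n k : ℕ) : 0 < wilkinsonWeight n k := by
  unfold wilkinsonWeight
  split_ifs <;> norm_num

/-- `n - i + (i - n)` is `|n - i|` in `ℕ`. -/
theorem wilkinsonWeight_row_lt {n i : ℕ} (hn : 3 ≤ n) (hi : i ≤ 2 * n) :
    (n - i + (i - n)) * wilkinsonWeight n i +
        (if i < 2 * n then wilkinsonWeight n (i + 1) else 0) +
        (if 0 < i then wilkinsonWeight n (i - 1) else 0) <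
      (n + 1) * wilkinsonWeight n i := by
  unfold wilkinsonWeight
  split_ifs <;> omega

theorem abs_eigenvalues_wilkinson_lt {n : ℕ} (hn : 3 ≤ n) (hW : (wilkinson n).IsHermitian)
    (j : Fin (2 * n + 1)) : |hW.eigenvalues j| < n + 1 := by
  refine abs_lt_of_nonneg_of_mulVec_lt (wilkinson_nonneg n)
    (w := fun k => (wilkinsonWeight n k : ℝ))
    (fun k => by exact_mod_cast wilkinsonWeight_pos n k) (fun i => ?_)
    (by simpa using hW.eigenvectorBasis.orthonormal.ne_zero j) (hW.mulVec_eigenvectorBasis j)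
  have habs : |(n : ℝ) - i| = ((n - i + (i - n) : ℕ) : ℝ) := by
    rcases le_total (i : ℕ) n with h | h
    · rw [abs_of_nonneg (by simpa using h)]; simp [Nat.sub_eq_zero_of_le h, Nat.cast_sub h]
    · rw [abs_of_nonpos (by simpa using h)]; simp [Nat.sub_eq_zero_of_le h, Nat.cast_sub h]
  rw [wilkinson_mulVec_apply n (fun k => (wilkinsonWeight n k : ℝ)), habs]
  exact_mod_cast wilkinsonWeight_row_lt hn (Nat.lt_succ_iff.1 i.isLt)

theorem exists_dotProduct_wilkinson_mulVec {n : ℕ} (hn : 0 < n) :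
    ∃ x, x ⬝ᵥ wilkinson n *ᵥ x = 2 * n + 1 ∧ x ⬝ᵥ x = 2 := by
  refine ⟨Pi.single ⟨0, by omega⟩ 1 + Pi.single ⟨1, by omega⟩ 1, ?_, ?_⟩
  · have h1 : |(n : ℝ) - 1| = n - 1 := abs_of_nonneg (sub_nonneg.2 (Nat.one_le_cast.2 hn))
    simp [mulVec_add, dotProduct_add, add_dotProduct, wilkinson, h1, two_mul, add_right_comm]
  · norm_num

end Wilkinson

/-- For `n > 4`, the largest eigenvalue of Wilkinson's matrix `W⁺_{2n+1}`
lies strictly between `n` and `n+1`. -/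
theorem stmt_12 (n : ℕ) (hn : 4 < n) (hW : (wilkinson n).IsHermitian) :
    (n : ℝ) < ithEig hW ⟨2 * n, by simp⟩ ∧
      ithEig hW ⟨2 * n, by simp⟩ < (n : ℝ) + 1 := by
  have hmax := eigenvalues_le_ithEig_of_succ_eq_card hW (i := ⟨2 * n, by simp⟩) (by simp)
  constructor
  · by_contra! h
    obtain ⟨x, hWx, hx⟩ := exists_dotProduct_wilkinson_mulVec (n := n) (by omega)
    have := hW.dotProduct_mulVec_le (fun j => (hmax j).trans h) x
    rw [hWx, hx] at this
    linarith
  · obtain ⟨j, hj⟩ := ithEig_mem_range_eigenvalues hW ⟨2 * n, by simp⟩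
    rw [← hj]
    exact (le_abs_self _).trans_lt (abs_eigenvalues_wilkinson_lt (by omega) hW j)
end
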